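/- arXiv:2010.05208 — 9 statements merged into one kernel-verified Lean document; each statement's English description precedes it below -/
import Mathlib

section
/- Let f : [a,b] → [a,b] be an l-modal map with turning points c₁ < ⋯ < c_l. For every n ≥ 1, let e_n be the number of points x in the open interval (a,b) at which f^n (the n-th iterate of f) has a local extremum, and let s_n be the number of points x ∈ (a,b) such that f^n(x) = c_i for some 1 ≤ i ≤ l while f^k(x) ≠ c_j for all 0 ≤ k ≤ n−1 and all 1 ≤ j ≤ l. Then both of these sets are finite and e_{n+1} = e_n + s_n for every n ≥ 1 (with e₁ = l). -/
/-- `f : [a,b] → [a,b]` is an `l`-modal map with extended turning-point data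
`c : ℕ → ℝ` (where `c 0 = a`, `c 1 < ⋯ < c l` are the turning points, and
`c (l+1) = b`) and shape `pos` (`pos = true` meaning `f` increases on the first
lap): `f` is continuous, maps `[a,b]` into itself, and is strictly monotone on
each lap `[c j, c (j+1)]`, with alternating directions. -/
def IsLModalWithShape (a b : ℝ) (l : ℕ) (c : ℕ → ℝ) (f : ℝ → ℝ) (pos : Bool) : Prop :=
  1 ≤ l ∧ c 0 = a ∧ c (l + 1) = b ∧ (∀ i ≤ l, c i < c (i + 1)) ∧
  Set.MapsTo f (Set.Icc a b) (Set.Icc a b) ∧ ContinuousOn f (Set.Icc a b) ∧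
  ∀ j ≤ l, ((Even j ↔ pos = true) → StrictMonoOn f (Set.Icc (c j) (c (j + 1)))) ∧
    (¬(Even j ↔ pos = true) → StrictAntiOn f (Set.Icc (c j) (c (j + 1))))

/-- `f` is `l`-modal (with either shape). -/
def IsLModal (a b : ℝ) (l : ℕ) (c : ℕ → ℝ) (f : ℝ → ℝ) : Prop :=
  ∃ pos : Bool, IsLModalWithShape a b l c f pos

/-!
A point `x ∈ (a,b)` is a local extremum of `f^[n]` exactly when its orbit meets a turning point
at some time `k < n`. If it does, `f^[k+1]` has an extremum at `x`, and every later application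
of `f` keeps it one: at a turning point `f` has an extremum itself, elsewhere `f` is strictly
monotone nearby. If it does not, `f^[n]` is injective, hence strictly monotone, near `x`: on an
interval none of whose points meets a turning point before time `n`, `f` is injective (the
interval lies in one lap) and maps it onto an interval with the same property for time `n - 1`.
Hence `E (n+1) \ E n = S n` and `E 1` is the set of turning points. The sets are finite by
induction on `n`: two points with the same value of `f^[n]` that first meet a turning point at
time `n` are separated, by the same injectivity, by a point that meets one earlier.
-/

open Set Filter Topology

theorem Set.finite_of_forall_exists_mem_Ioo {α : Type*} [LinearOrder α] {A B : Set α}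
    (hB : B.Finite) (hAB : ∀ x ∈ A, ∀ y ∈ A, x < y → ∃ z ∈ B, z ∈ Ioo x y) :
    A.Finite := by
  have hmono : StrictMonoOn (fun x => B ∩ Iio x) A := by
    intro x hx y hy hxy
    obtain ⟨z, hzB, hxz, hzy⟩ := hAB x hx y hy hxy
    show B ∩ Iio x ⊂ B ∩ Iio y
    rw [ssubset_iff_of_subset (inter_subset_inter_right _ (Iio_subset_Iio hxy.le))]
    exact ⟨z, ⟨hzB, hzy⟩, fun hz => hz.2.not_gt hxz⟩
  refine Finite.of_finite_image (hB.finite_subsets.subset ?_) hmono.injOn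
  rintro _ ⟨x, -, rfl⟩
  exact inter_subset_left

theorem IsExtrFilter.comp_of_monotoneOn_or_antitoneOn {α β γ : Type*} [Preorder β] [Preorder γ]
    {g : α → β} {h : β → γ} {F : Filter α} {x : α} {V : Set β} (hg : IsExtrFilter g F x)
    (hV : ∀ᶠ y in F, g y ∈ V) (hx : g x ∈ V) (hh : MonotoneOn h V ∨ AntitoneOn h V) :
    IsExtrFilter (h ∘ g) F x := by
  rcases hh with hh | hh <;> rcases hg with hg | hg
  · exact .inl <| by filter_upwards [hg, hV] with y hy hyV using hh hx hyV hy
  · exact .inr <| by filter_upwards [hg, hV] with y hy hyV using hh hyV hx hy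
  · exact .inr <| by filter_upwards [hg, hV] with y hy hyV using hh hx hyV hy
  · exact .inl <| by filter_upwards [hg, hV] with y hy hyV using hh hyV hx hy

section LocalExtr

variable {α β : Type*} [TopologicalSpace α] [LinearOrder α] [OrderTopology α]
  [DenselyOrdered α] [NoMinOrder α] [NoMaxOrder α] [Preorder β]
  {g : α → β} {s : Set α} {x : α}

theorem StrictMonoOn.not_isLocalExtr (hg : StrictMonoOn g s) (hs : s ∈ 𝓝 x) :
    ¬IsLocalExtr g x := by
  rintro (hmin | hmax)
  · obtain ⟨y, hyx, hgy, hy⟩ := (hmin.and hs).exists_lt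
    exact (hg hy (mem_of_mem_nhds hs) hyx).not_ge hgy
  · obtain ⟨y, hxy, hgy, hy⟩ := (hmax.and hs).exists_gt
    exact (hg (mem_of_mem_nhds hs) hy hxy).not_ge hgy

theorem StrictAntiOn.not_isLocalExtr (hg : StrictAntiOn g s) (hs : s ∈ 𝓝 x) :
    ¬IsLocalExtr g x :=
  fun hext => hg.dual_right.not_isLocalExtr hs (isExtrFilter_dual_iff.2 hext)

end LocalExtr

theorem isMaxOn_Icc_of_monotoneOn_of_antitoneOn {α β : Type*} [LinearOrder α] [Preorder β]
    {g : α → β} {p q r : α} (h₁ : MonotoneOn g (Icc p q)) (h₂ : AntitoneOn g (Icc q r))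
    (hpq : p ≤ q) (hqr : q ≤ r) : IsMaxOn g (Icc p r) q := by
  intro y hy
  rcases le_total y q with hyq | hqy
  · exact h₁ ⟨hy.1, hyq⟩ ⟨hpq, le_rfl⟩ hyq
  · exact h₂ ⟨le_rfl, hqr⟩ ⟨hqy, hy.2⟩ hqy

def hitBefore {α : Type*} (f : α → α) (T : Set α) (n : ℕ) : Set α :=
  {x | ∃ k < n, f^[k] x ∈ T}

section hitBefore

variable {α : Type*} {f : α → α} {T : Set α} {n : ℕ}

@[simp]
theorem hitBefore_zero : hitBefore f T 0 = ∅ := by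
  simp [hitBefore]

theorem hitBefore_succ : hitBefore f T (n + 1) = hitBefore f T n ∪ f^[n] ⁻¹' T := by
  ext x
  exact Nat.exists_lt_succ_right

theorem hitBefore_succ' : hitBefore f T (n + 1) = T ∪ f ⁻¹' hitBefore f T n := by
  ext x
  exact Nat.exists_lt_succ_left

theorem hitBefore_one : hitBefore f T 1 = T := by
  simp [hitBefore_succ]

end hitBefore

def turningPoints (l : ℕ) (c : ℕ → ℝ) : Set ℝ := c '' Icc 1 l

namespace IsLModal

variable {a b : ℝ} {l : ℕ} {c : ℕ → ℝ} {f : ℝ → ℝ}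

local notation "𝒯" => turningPoints l c

theorem strictMonoOn_c (h : IsLModal a b l c f) : StrictMonoOn c (Iic (l + 1)) := by
  obtain ⟨-, -, -, -, hc, -⟩ := h
  exact strictMonoOn_Iic_of_lt_succ fun m hm => by simpa using hc m (by omega)

theorem mapsTo (h : IsLModal a b l c f) : MapsTo f (Icc a b) (Icc a b) := by
  obtain ⟨-, -, -, -, -, hmaps, -⟩ := h
  exact hmaps

theorem continuousOn (h : IsLModal a b l c f) : ContinuousOn f (Icc a b) := by
  obtain ⟨-, -, -, -, -, -, hcont, -⟩ := h
  exact hcont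

theorem turningPoints_subset_Ioo (h : IsLModal a b l c f) : 𝒯 ⊆ Ioo a b := by
  rintro _ ⟨j, ⟨hj1, hjl⟩, rfl⟩
  have hc := h.strictMonoOn_c
  obtain ⟨-, -, hc0, hcl, -⟩ := h
  exact ⟨hc0 ▸ hc (mem_Iic.2 (by omega)) (mem_Iic.2 (by omega)) (by omega),
    hcl ▸ hc (mem_Iic.2 (by omega)) (mem_Iic.2 le_rfl) (by omega)⟩

theorem ncard_turningPoints (h : IsLModal a b l c f) : (𝒯).ncard = l := by
  rw [turningPoints, (h.strictMonoOn_c.injOn.mono fun i hi => ?_).ncard_image]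
  · simp
  · exact mem_Iic.2 (hi.2.trans (Nat.le_succ l))

theorem strictMonoOn_or_strictAntiOn_lap (h : IsLModal a b l c f) {j : ℕ} (hj : j ≤ l) :
    StrictMonoOn f (Icc (c j) (c (j + 1))) ∨ StrictAntiOn f (Icc (c j) (c (j + 1))) := by
  obtain ⟨pos, -, -, -, -, -, -, hlap⟩ := h
  by_cases hp : Even j ↔ pos = true
  exacts [.inl ((hlap j hj).1 hp), .inr ((hlap j hj).2 hp)]

theorem exists_lap_of_ordConnected (h : IsLModal a b l c f) {s : Set ℝ} (hs : s.OrdConnected)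
    (hsab : s ⊆ Icc a b) (hsT : Disjoint s (𝒯)) :
    ∃ j ≤ l, s ⊆ Icc (c j) (c (j + 1)) := by
  rcases s.eq_empty_or_nonempty with rfl | ⟨x₀, hx₀⟩
  · exact ⟨0, Nat.zero_le l, empty_subset _⟩
  obtain ⟨-, -, hc0, hcl, -⟩ := h
  have hT : ∀ i, 1 ≤ i → i ≤ l → c i ∉ s := fun i hi1 hil hi =>
    disjoint_left.1 hsT hi ⟨i, ⟨hi1, hil⟩, rfl⟩
  set j := Nat.findGreatest (fun j => c j ≤ x₀) l
  have hjl : j ≤ l := Nat.findGreatest_le l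
  have hcj : c j ≤ x₀ :=
    Nat.findGreatest_spec (P := fun j => c j ≤ x₀) (Nat.zero_le l) (hc0 ▸ (hsab hx₀).1)
  refine ⟨j, hjl, fun y hy => ⟨?_, ?_⟩⟩
  · by_contra! hyj
    have hj1 : 1 ≤ j := Nat.one_le_iff_ne_zero.2 fun hj0 => by
      rw [hj0, hc0] at hyj
      exact (hsab hy).1.not_gt hyj
    exact hT j hj1 hjl (hs.out hy hx₀ ⟨hyj.le, hcj⟩)
  · by_contra! hyj
    have hj1 : j + 1 ≤ l := Nat.succ_le_of_lt <| hjl.lt_of_ne fun hjl' => by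
      rw [hjl', hcl] at hyj
      exact (hsab hy).2.not_gt hyj
    have hx₀j : x₀ < c (j + 1) :=
      not_le.1 (Nat.findGreatest_is_greatest (P := fun j => c j ≤ x₀) (Nat.lt_succ_self j) hj1)
    exact hT (j + 1) (Nat.le_add_left 1 j) hj1 (hs.out hx₀ hy ⟨hx₀j.le, hyj.le⟩)

theorem strictMonoOn_or_strictAntiOn_of_ordConnected (h : IsLModal a b l c f) {s : Set ℝ}
    (hs : s.OrdConnected) (hsab : s ⊆ Icc a b) (hsT : Disjoint s (𝒯)) :
    StrictMonoOn f s ∨ StrictAntiOn f s := by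
  obtain ⟨j, hjl, hsj⟩ := h.exists_lap_of_ordConnected hs hsab hsT
  exact (h.strictMonoOn_or_strictAntiOn_lap hjl).imp (·.mono hsj) (·.mono hsj)

theorem isLocalExtr_of_mem_turningPoints (h : IsLModal a b l c f) {x : ℝ}
    (hx : x ∈ 𝒯) : IsLocalExtr f x := by
  obtain ⟨i, hil, rfl⟩ : ∃ i, i + 1 ≤ l ∧ x = c (i + 1) := by
    obtain ⟨j, ⟨hj1, hjl⟩, rfl⟩ := hx
    exact ⟨j - 1, by omega, by rw [Nat.sub_add_cancel hj1]⟩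
  have hc := h.strictMonoOn_c
  have hlt₁ : c i < c (i + 1) := hc (mem_Iic.2 (by omega)) (mem_Iic.2 (by omega)) (by omega)
  have hlt₂ : c (i + 1) < c (i + 1 + 1) :=
    hc (mem_Iic.2 (by omega)) (mem_Iic.2 (by omega)) (by omega)
  have hnhds : Icc (c i) (c (i + 1 + 1)) ∈ 𝓝 (c (i + 1)) := Icc_mem_nhds hlt₁ hlt₂
  obtain ⟨pos, -, -, -, -, -, -, hlap⟩ := h
  have hpar : (Even (i + 1) ↔ pos = true) ↔ ¬(Even i ↔ pos = true) := by
    rw [Nat.even_add_one]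
    tauto
  by_cases hp : Even i ↔ pos = true
  · refine .inr <| IsMaxOn.isLocalMax ?_ hnhds
    exact isMaxOn_Icc_of_monotoneOn_of_antitoneOn ((hlap i (by omega)).1 hp).monotoneOn
      ((hlap (i + 1) hil).2 (hpar.not.2 (not_not.2 hp))).antitoneOn hlt₁.le hlt₂.le
  · refine .inl <| IsMinOn.isLocalMin (isMaxOn_dual_iff.1 ?_) hnhds
    exact isMaxOn_Icc_of_monotoneOn_of_antitoneOn ((hlap i (by omega)).2 hp).antitoneOn.dual_right
      ((hlap (i + 1) hil).1 (hpar.2 hp)).monotoneOn.dual_right hlt₁.le hlt₂.le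

theorem exists_mem_nhdsWithin_strictMonoOn_or_strictAntiOn (h : IsLModal a b l c f) {w : ℝ}
    (hwT : w ∉ 𝒯) :
    ∃ V ∈ 𝓝[Icc a b] w, StrictMonoOn f V ∨ StrictAntiOn f V := by
  have hT : (𝒯)ᶜ ∈ 𝓝 w :=
    ((finite_Icc 1 l).image c).isClosed.isOpen_compl.mem_nhds hwT
  obtain ⟨u, v, hwuv, huvT⟩ := mem_nhds_iff_exists_Ioo_subset.1 hT
  refine ⟨Icc a b ∩ Ioo u v, inter_mem_nhdsWithin _ (Ioo_mem_nhds hwuv.1 hwuv.2), ?_⟩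
  exact h.strictMonoOn_or_strictAntiOn_of_ordConnected (ordConnected_Icc.inter ordConnected_Ioo)
    inter_subset_left (subset_compl_iff_disjoint_right.1 (inter_subset_right.trans huvT))

theorem injOn_iterate (h : IsLModal a b l c f) (n : ℕ) {s : Set ℝ} (hs : s.OrdConnected)
    (hsab : s ⊆ Icc a b) (hsn : Disjoint s (hitBefore f (𝒯) n)) :
    InjOn f^[n] s := by
  induction n generalizing s with
  | zero => exact injOn_id s
  | succ n ih =>
    rw [hitBefore_succ', disjoint_union_right, ← disjoint_image_left] at hsn
    have hfs : InjOn f s := (h.strictMonoOn_or_strictAntiOn_of_ordConnected hs hsab hsn.1).elim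
      StrictMonoOn.injOn StrictAntiOn.injOn
    have himage : (f '' s).OrdConnected :=
      (hs.isPreconnected.image f (h.continuousOn.mono hsab)).ordConnected
    rw [Function.iterate_succ]
    exact (ih himage ((h.mapsTo.mono_left hsab).image_subset) hsn.2).comp hfs (mapsTo_image f s)

theorem finite_fiber_iterate (h : IsLModal a b l c f) {n : ℕ}
    (hn : (Icc a b ∩ hitBefore f (𝒯) n).Finite) (t : ℝ) :
    ((Icc a b \ hitBefore f (𝒯) n) ∩ f^[n] ⁻¹' {t}).Finite := by
  refine finite_of_forall_exists_mem_Ioo hn ?_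
  rintro x ⟨⟨hx, hxn⟩, hxt⟩ y ⟨⟨hy, hyn⟩, hyt⟩ hxy
  by_contra! hsep
  have hxy_n : Disjoint (Icc x y) (hitBefore f (𝒯) n) := by
    refine disjoint_left.2 fun z hz hzn => ?_
    rcases eq_endpoints_or_mem_Ioo_of_mem_Icc hz with rfl | rfl | hz'
    exacts [hxn hzn, hyn hzn, hsep z ⟨⟨hx.1.trans hz.1, hz.2.trans hy.2⟩, hzn⟩ hz']
  exact hxy.ne (h.injOn_iterate n ordConnected_Icc (Icc_subset_Icc hx.1 hy.2) hxy_n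
    (left_mem_Icc.2 hxy.le) (right_mem_Icc.2 hxy.le) (hxt.trans hyt.symm))

theorem finite_hitBefore (h : IsLModal a b l c f) (n : ℕ) :
    (Icc a b ∩ hitBefore f (𝒯) n).Finite := by
  induction n with
  | zero => simp
  | succ n ih =>
    rw [hitBefore_succ]
    have hsub : Icc a b ∩ (hitBefore f (𝒯) n ∪ f^[n] ⁻¹' 𝒯) ⊆
        (Icc a b ∩ hitBefore f (𝒯) n) ∪
          ⋃ t ∈ 𝒯, (Icc a b \ hitBefore f (𝒯) n) ∩ f^[n] ⁻¹' {t} := by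
      rintro x ⟨hx, hxn | hxT⟩
      · exact .inl ⟨hx, hxn⟩
      by_cases hxn : x ∈ hitBefore f (𝒯) n
      · exact .inl ⟨hx, hxn⟩
      · exact .inr (mem_biUnion hxT ⟨⟨hx, hxn⟩, rfl⟩)
    exact (ih.union (((finite_Icc 1 l).image c).biUnion fun t _ =>
      h.finite_fiber_iterate ih t)).subset hsub

theorem isLocalExtrOn_iterate (h : IsLModal a b l c f) {n : ℕ} {x : ℝ} (hx : x ∈ Icc a b)
    (hxn : x ∈ hitBefore f (𝒯) n) : IsLocalExtrOn f^[n] (Icc a b) x := by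
  induction n with
  | zero => simp at hxn
  | succ n ih =>
    have hmaps := h.mapsTo.iterate n
    have hcont := h.continuousOn.iterate h.mapsTo n
    rw [Function.iterate_succ']
    by_cases hw : f^[n] x ∈ 𝒯
    · exact ((h.isLocalExtr_of_mem_turningPoints hw).on (Icc a b)).comp_continuousOn _
        hmaps hcont hx
    · rw [hitBefore_succ] at hxn
      obtain ⟨V, hV, hfV⟩ := h.exists_mem_nhdsWithin_strictMonoOn_or_strictAntiOn hw
      exact (ih (hxn.resolve_right hw)).comp_of_monotoneOn_or_antitoneOn
        ((hcont x hx).tendsto_nhdsWithin hmaps hV) (mem_of_mem_nhdsWithin (hmaps hx) hV)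
        (hfV.imp StrictMonoOn.monotoneOn StrictAntiOn.antitoneOn)

theorem not_isLocalExtrOn_iterate (h : IsLModal a b l c f) {n : ℕ} {x : ℝ} (hx : x ∈ Ioo a b)
    (hxn : x ∉ hitBefore f (𝒯) n) : ¬IsLocalExtrOn f^[n] (Icc a b) x := by
  have hU : Ioo a b \ (Icc a b ∩ hitBefore f (𝒯) n) ∈ 𝓝 x :=
    (isOpen_Ioo.sdiff (h.finite_hitBefore n).isClosed).mem_nhds ⟨hx, fun hx' => hxn hx'.2⟩
  obtain ⟨u, v, hxuv, hnhds, huvU⟩ := exists_Icc_mem_subset_of_mem_nhds hU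
  have huv : Icc u v ⊆ Icc a b := fun y hy => Ioo_subset_Icc_self (huvU hy).1
  have hinj := h.injOn_iterate n ordConnected_Icc huv
    (disjoint_left.2 fun y hy hyn => (huvU hy).2 ⟨huv hy, hyn⟩)
  have hcont : ContinuousOn f^[n] (Icc u v) := (h.continuousOn.iterate h.mapsTo n).mono huv
  intro hext
  have hext' : IsLocalExtr f^[n] x := hext.isLocalExtr (Icc_mem_nhds hx.1 hx.2)
  rcases hcont.strictMonoOn_of_injOn_Icc' (hxuv.1.trans hxuv.2) hinj with hm | hm
  exacts [hm.not_isLocalExtr hnhds hext', hm.not_isLocalExtr hnhds hext']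

theorem isLocalExtrOn_iterate_iff (h : IsLModal a b l c f) {n : ℕ} {x : ℝ}
    (hx : x ∈ Ioo a b) :
    IsLocalExtrOn f^[n] (Icc a b) x ↔ x ∈ hitBefore f (𝒯) n :=
  ⟨fun hext => by_contra fun hxn => h.not_isLocalExtrOn_iterate hx hxn hext,
    h.isLocalExtrOn_iterate (Ioo_subset_Icc_self hx)⟩

end IsLModal

/-- For an `l`-modal map `f`, with `e_n` the number of interior local extrema of
`f^n` and `s_n` the number of interior points falling on a turning point exactly
at time `n`, both sets are finite, `e_{n+1} = e_n + s_n` for all `n ≥ 1`, and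
`e₁ = l`. -/
theorem lap_extrema_recursion (a b : ℝ) (l : ℕ) (c : ℕ → ℝ) (f : ℝ → ℝ)
    (hf : IsLModal a b l c f)
    (E : ℕ → Set ℝ) (S : ℕ → Set ℝ)
    (hE : ∀ n, E n = {x ∈ Set.Ioo a b |
      IsLocalMaxOn (f^[n]) (Set.Icc a b) x ∨ IsLocalMinOn (f^[n]) (Set.Icc a b) x})
    (hS : ∀ n, S n = {x ∈ Set.Ioo a b |
      (∃ i, 1 ≤ i ∧ i ≤ l ∧ f^[n] x = c i) ∧
      ∀ k < n, ∀ j, 1 ≤ j → j ≤ l → f^[k] x ≠ c j}) :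
    (∀ n, 1 ≤ n → (E n).Finite ∧ (S n).Finite ∧
      (E (n + 1)).ncard = (E n).ncard + (S n).ncard) ∧
    (E 1).ncard = l := by
  have hE' : ∀ n, E n = Ioo a b ∩ hitBefore f (turningPoints l c) n := fun n => by
    rw [hE n]
    ext x
    exact and_congr_right fun hx => or_comm.trans (hf.isLocalExtrOn_iterate_iff hx)
  have hS' : ∀ n, S n = E (n + 1) \ E n := fun n => by
    rw [hS n, hE', hE', hitBefore_succ]
    ext x
    simp only [turningPoints, hitBefore, mem_ofPred_eq, Set.mem_sdiff, mem_inter_iff, mem_union,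
      mem_preimage, mem_image, mem_Icc, and_assoc, @eq_comm _ (c _)]
    push Not
    tauto
  have hfin : ∀ n, (E n).Finite := fun n =>
    (hf.finite_hitBefore n).subset (hE' n ▸ inter_subset_inter_left _ Ioo_subset_Icc_self)
  have hmono : ∀ n, E n ⊆ E (n + 1) := fun n => by
    rw [hE', hE', hitBefore_succ]
    exact inter_subset_inter_right _ subset_union_left
  refine ⟨fun n _ => ⟨hfin n, hS' n ▸ (hfin (n + 1)).sdiff, ?_⟩, ?_⟩
  · rw [hS' n, ← ncard_sdiff_add_ncard_of_subset (hmono n) (hfin (n + 1)), add_comm]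
  · rw [hE', hitBefore_one, inter_eq_right.2 hf.turningPoints_subset_Ioo, hf.ncard_turningPoints]
end

section
/- Let f : [a,b] → [a,b] be an l-modal map with turning points c₁ < ⋯ < c_l and positive shape, let n ≥ 1 and x ∈ (a,b). Then f^{n+1} has a local maximum at x if any of the following holds: (i) f^n(x) = c_i for some odd index i; (ii) f^n(x) lies in the open interval (c_{i−1}, c_i) (reading c₀ = a, c_{l+1} = b) for some even index i and f^n has a local minimum at x; (iii) f^n(x) lies in the open interval corresponding to an odd index i and f^n has a local maximum at x. Dually, f^{n+1} has a local minimum at x if: (i') f^n(x) = c_i for some even index i; (ii') f^n(x) lies in the open interval with odd index i and f^n has a local minimum at x; or (iii') f^n(x) lies in the open interval with even index i and f^n has a local maximum at x. -/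
/-! By continuity, `f^[n]` maps a neighbourhood of `x` into any neighbourhood of `f^[n] x`.
Since `f` increases on the laps of odd index and decreases on those of even index, composing
with `f` keeps a local extremum of `f^[n]` inside an odd lap and swaps its type inside an even
one. At a turning point `f` itself has a local maximum (odd index) or minimum (even index),
which `f^[n + 1] = f ∘ f^[n]` inherits whatever `f^[n]` does near `x`. -/

open Set Topology

section CompMonotoneOn

variable {α β γ : Type*} [TopologicalSpace α] [TopologicalSpace β] [Preorder β] [Preorder γ]
  {F : α → β} {g : β → γ} {s : Set α} {t : Set β} {x : α}

theorem IsLocalMaxOn.comp_monotoneOn (hF : IsLocalMaxOn F s x)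
    (hFx : ContinuousWithinAt F s x) (ht : t ∈ 𝓝 (F x)) (hg : MonotoneOn g t) :
    IsLocalMaxOn (g ∘ F) s x := by
  filter_upwards [hFx ht, hF] with y hy hle
  exact hg hy (mem_of_mem_nhds ht) hle

theorem IsLocalMinOn.comp_monotoneOn (hF : IsLocalMinOn F s x)
    (hFx : ContinuousWithinAt F s x) (ht : t ∈ 𝓝 (F x)) (hg : MonotoneOn g t) :
    IsLocalMinOn (g ∘ F) s x :=
  IsLocalMaxOn.comp_monotoneOn (β := βᵒᵈ) (γ := γᵒᵈ) hF hFx ht hg.dual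

theorem IsLocalMaxOn.comp_antitoneOn (hF : IsLocalMaxOn F s x)
    (hFx : ContinuousWithinAt F s x) (ht : t ∈ 𝓝 (F x)) (hg : AntitoneOn g t) :
    IsLocalMinOn (g ∘ F) s x :=
  IsLocalMaxOn.comp_monotoneOn (γ := γᵒᵈ) hF hFx ht hg

theorem IsLocalMinOn.comp_antitoneOn (hF : IsLocalMinOn F s x)
    (hFx : ContinuousWithinAt F s x) (ht : t ∈ 𝓝 (F x)) (hg : AntitoneOn g t) :
    IsLocalMaxOn (g ∘ F) s x :=
  IsLocalMaxOn.comp_monotoneOn (β := βᵒᵈ) hF hFx ht hg.dual_left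

end CompMonotoneOn

namespace IsLModalWithShape

variable {a b : ℝ} {l : ℕ} {c : ℕ → ℝ} {f : ℝ → ℝ} {i : ℕ}

theorem continuousOn_iterate (hf : IsLModalWithShape a b l c f true) (n : ℕ) :
    ContinuousOn f^[n] (Icc a b) := by
  obtain ⟨-, -, -, -, hmaps, hcont, -⟩ := hf
  exact hcont.iterate hmaps n

theorem turningPoint_pred_lt (hf : IsLModalWithShape a b l c f true) (hi₁ : 1 ≤ i)
    (hi : i ≤ l + 1) : c (i - 1) < c i := by
  obtain ⟨-, -, -, hc, -⟩ := hf
  obtain ⟨j, rfl⟩ : ∃ j, i = j + 1 := ⟨i - 1, by omega⟩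
  exact hc j (by omega)

theorem monotoneOn_lap (hf : IsLModalWithShape a b l c f true) (hi : i ≤ l + 1)
    (hodd : Odd i) : MonotoneOn f (Icc (c (i - 1)) (c i)) := by
  obtain ⟨-, -, -, -, -, -, hlaps⟩ := hf
  obtain ⟨k, rfl⟩ := hodd
  simp only [Nat.add_sub_cancel]
  exact ((hlaps (2 * k) (by omega)).1 (by simp)).monotoneOn

theorem antitoneOn_lap (hf : IsLModalWithShape a b l c f true) (hi₁ : 1 ≤ i)
    (hi : i ≤ l + 1) (heven : Even i) : AntitoneOn f (Icc (c (i - 1)) (c i)) := by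
  obtain ⟨-, -, -, -, -, -, hlaps⟩ := hf
  obtain ⟨j, rfl⟩ : ∃ j, i = j + 1 := ⟨i - 1, by omega⟩
  simp only [Nat.add_sub_cancel]
  exact ((hlaps j (by omega)).2 (by simpa [Nat.even_add_one] using heven)).antitoneOn

theorem isLocalMax_turningPoint (hf : IsLModalWithShape a b l c f true) (hi₁ : 1 ≤ i)
    (hi : i ≤ l) (hodd : Odd i) : IsLocalMax f (c i) := by
  have hright := hf.antitoneOn_lap (i := i + 1) (by omega) (by omega) hodd.add_one
  rw [Nat.add_sub_cancel] at hright
  exact isLocalMax_of_mono_anti (hf.turningPoint_pred_lt hi₁ (by omega))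
    (hf.turningPoint_pred_lt (i := i + 1) (by omega) (by omega))
    ((hf.monotoneOn_lap (by omega) hodd).mono Ioc_subset_Icc_self)
    (hright.mono Ico_subset_Icc_self)

theorem isLocalMin_turningPoint (hf : IsLModalWithShape a b l c f true) (hi₁ : 1 ≤ i)
    (hi : i ≤ l) (heven : Even i) : IsLocalMin f (c i) := by
  have hright := hf.monotoneOn_lap (i := i + 1) (by omega) heven.add_one
  rw [Nat.add_sub_cancel] at hright
  exact isLocalMin_of_anti_mono (hf.turningPoint_pred_lt hi₁ (by omega))
    (hf.turningPoint_pred_lt (i := i + 1) (by omega) (by omega))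
    ((hf.antitoneOn_lap hi₁ (by omega) heven).mono Ioc_subset_Icc_self)
    (hright.mono Ico_subset_Icc_self)

end IsLModalWithShape

theorem iterate_local_extrema_rules_general (a b : ℝ) (l : ℕ) (c : ℕ → ℝ) (f : ℝ → ℝ)
    (hf : IsLModalWithShape a b l c f true) (n : ℕ)
    (x : ℝ) (hx : x ∈ Set.Ioo a b) :
    -- f^{n+1} has a local maximum at x in each of the three cases:
    ((∀ i, 1 ≤ i → i ≤ l → Odd i → f^[n] x = c i →
        IsLocalMaxOn (f^[n + 1]) (Set.Icc a b) x) ∧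
     (∀ i, 1 ≤ i → i ≤ l + 1 → Even i → f^[n] x ∈ Set.Ioo (c (i - 1)) (c i) →
        IsLocalMinOn (f^[n]) (Set.Icc a b) x →
        IsLocalMaxOn (f^[n + 1]) (Set.Icc a b) x) ∧
     (∀ i, 1 ≤ i → i ≤ l + 1 → Odd i → f^[n] x ∈ Set.Ioo (c (i - 1)) (c i) →
        IsLocalMaxOn (f^[n]) (Set.Icc a b) x →
        IsLocalMaxOn (f^[n + 1]) (Set.Icc a b) x)) ∧
    -- f^{n+1} has a local minimum at x in each of the three dual cases:
    ((∀ i, 1 ≤ i → i ≤ l → Even i → f^[n] x = c i →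
        IsLocalMinOn (f^[n + 1]) (Set.Icc a b) x) ∧
     (∀ i, 1 ≤ i → i ≤ l + 1 → Odd i → f^[n] x ∈ Set.Ioo (c (i - 1)) (c i) →
        IsLocalMinOn (f^[n]) (Set.Icc a b) x →
        IsLocalMinOn (f^[n + 1]) (Set.Icc a b) x) ∧
     (∀ i, 1 ≤ i → i ≤ l + 1 → Even i → f^[n] x ∈ Set.Ioo (c (i - 1)) (c i) →
        IsLocalMaxOn (f^[n]) (Set.Icc a b) x →
        IsLocalMinOn (f^[n + 1]) (Set.Icc a b) x)) := by
  have hxI : x ∈ Icc a b := Ioo_subset_Icc_self hx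
  have hcontOn := hf.continuousOn_iterate n
  have hcont : ContinuousWithinAt f^[n] (Icc a b) x := hcontOn x hxI
  simp only [Function.iterate_succ']
  refine ⟨⟨fun i hi₁ hi hodd hturn => ?_, fun i hi₁ hi heven hlap hmin => ?_,
      fun i _ hi hodd hlap hmax => ?_⟩,
    ⟨fun i hi₁ hi heven hturn => ?_, fun i _ hi hodd hlap hmin => ?_,
      fun i hi₁ hi heven hlap hmax => ?_⟩⟩
  · exact (hturn ▸ hf.isLocalMax_turningPoint hi₁ hi hodd).comp_continuousOn hcontOn hxI
  · exact hmin.comp_antitoneOn hcont (Icc_mem_nhds hlap.1 hlap.2) (hf.antitoneOn_lap hi₁ hi heven)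
  · exact hmax.comp_monotoneOn hcont (Icc_mem_nhds hlap.1 hlap.2) (hf.monotoneOn_lap hi hodd)
  · exact (hturn ▸ hf.isLocalMin_turningPoint hi₁ hi heven).comp_continuousOn hcontOn hxI
  · exact hmin.comp_monotoneOn hcont (Icc_mem_nhds hlap.1 hlap.2) (hf.monotoneOn_lap hi hodd)
  · exact hmax.comp_antitoneOn hcont (Icc_mem_nhds hlap.1 hlap.2) (hf.antitoneOn_lap hi₁ hi heven)

/-- Local max/min propagation for iterates of an `l`-modal map of positive shape:
`f^{n+1}` has a local maximum at `x` if (i) `f^n(x)` is a turning point of odd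
index, (ii) `f^n(x)` lies in an open lap of even index and `f^n` has a local
minimum at `x`, or (iii) `f^n(x)` lies in an open lap of odd index and `f^n` has
a local maximum at `x`; and dually for local minima. -/
theorem iterate_local_extrema_rules (a b : ℝ) (l : ℕ) (c : ℕ → ℝ) (f : ℝ → ℝ)
    (hf : IsLModalWithShape a b l c f true) (n : ℕ) (hn : 1 ≤ n)
    (x : ℝ) (hx : x ∈ Set.Ioo a b) :
    -- f^{n+1} has a local maximum at x in each of the three cases:
    ((∀ i, 1 ≤ i → i ≤ l → Odd i → f^[n] x = c i →
        IsLocalMaxOn (f^[n + 1]) (Set.Icc a b) x) ∧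
     (∀ i, 1 ≤ i → i ≤ l + 1 → Even i → f^[n] x ∈ Set.Ioo (c (i - 1)) (c i) →
        IsLocalMinOn (f^[n]) (Set.Icc a b) x →
        IsLocalMaxOn (f^[n + 1]) (Set.Icc a b) x) ∧
     (∀ i, 1 ≤ i → i ≤ l + 1 → Odd i → f^[n] x ∈ Set.Ioo (c (i - 1)) (c i) →
        IsLocalMaxOn (f^[n]) (Set.Icc a b) x →
        IsLocalMaxOn (f^[n + 1]) (Set.Icc a b) x)) ∧
    -- f^{n+1} has a local minimum at x in each of the three dual cases:
    ((∀ i, 1 ≤ i → i ≤ l → Even i → f^[n] x = c i →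
        IsLocalMinOn (f^[n + 1]) (Set.Icc a b) x) ∧
     (∀ i, 1 ≤ i → i ≤ l + 1 → Odd i → f^[n] x ∈ Set.Ioo (c (i - 1)) (c i) →
        IsLocalMinOn (f^[n]) (Set.Icc a b) x →
        IsLocalMinOn (f^[n + 1]) (Set.Icc a b) x) ∧
     (∀ i, 1 ≤ i → i ≤ l + 1 → Even i → f^[n] x ∈ Set.Ioo (c (i - 1)) (c i) →
        IsLocalMaxOn (f^[n]) (Set.Icc a b) x →
        IsLocalMinOn (f^[n + 1]) (Set.Icc a b) x)) :=
  iterate_local_extrema_rules_general a b l c f hf n x hx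
end

section
/- Let σ = (σ₁,…,σ_n) ∈ {+1,−1}^n and let t ∈ [0,2] belong to the definition domain of the root branch φ_σ. Then the derivative of the polynomial x ↦ q_t^n(x) vanishes at the point x = φ_σ(t) if and only if φ_{(σ_{k+1},…,σ_n)}(t) = 0 for some 0 ≤ k ≤ n−1 (where for k = 0 this means φ_σ(t) = 0). In particular, the singular parameters of a root branch are exactly those at which the corresponding zero of q_t^n is a multiple zero. -/
/-- The quadratic map `q_t(x) = t - x^2`. -/
noncomputable def q (t x : ℝ) : ℝ := t - x ^ 2

/-- The root branch `φ_σ(t)` associated with a sign sequence `σ = (σ₁, …, σ_n)`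
(encoded as a list of reals, each `±1`, with head `σ₁`), defined recursively by
`φ_{[]}(t) = 0` and `φ_{σ₁ :: ρ}(t) = σ₁ · √(t + φ_ρ(t))`; thus
`φ_σ(t) = σ₁√(t + σ₂√(t + ⋯ + σ_n√t))`. -/
noncomputable def phi : List ℝ → ℝ → ℝ
  | [], _ => 0
  | s :: rest, t => s * Real.sqrt (t + phi rest t)

/-- `σ` is a sequence of signs `±1`. -/
def IsSigns (σ : List ℝ) : Prop := ∀ s ∈ σ, s = 1 ∨ s = -1

/-- `t` belongs to the definition domain of `φ_σ`: `t ≥ 0` and every radicand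
`t + φ_ρ(t)`, for `ρ` a proper suffix of `σ`, is nonnegative. -/
def InDom (σ : List ℝ) (t : ℝ) : Prop :=
  0 ≤ t ∧ ∀ ρ : List ℝ, ρ <:+ σ → ρ ≠ σ → 0 ≤ t + phi ρ t

/-- `t` is a regular point of `φ_σ`: `t` is in the definition domain and
`φ_ρ(t) ≠ 0` for every nonempty suffix `ρ` of `σ` (including `σ` itself). -/
def IsRegularPt (σ : List ℝ) (t : ℝ) : Prop :=
  InDom σ t ∧ ∀ ρ : List ℝ, ρ <:+ σ → ρ ≠ [] → phi ρ t ≠ 0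

/-!
Along the orbit of `x = φ_σ(t)` the map `q_t` peels off one sign at a time:
`q_t(σ₁√(t + φ_ρ(t))) = -φ_ρ(t)`, so `|q_tᵏ(x)| = |φ_{(σ_{k+1},…,σ_n)}(t)|`.
By the chain rule `(q_tⁿ)'(x) = ∏_{k<n} (-2 q_tᵏ(x))`, which therefore vanishes exactly
when one of these suffix branches does.
-/

theorem deriv_iterate_eq_prod {𝕜 : Type*} [NontriviallyNormedField 𝕜] {f : 𝕜 → 𝕜}
    (hf : Differentiable 𝕜 f) (n : ℕ) (x : 𝕜) :
    deriv f^[n] x = ∏ k ∈ Finset.range n, deriv f (f^[k] x) := by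
  induction n with
  | zero => simp
  | succ n ih =>
    rw [Function.iterate_succ', deriv_comp x hf.differentiableAt
      ((hf.iterate n).differentiableAt), ih, Finset.prod_range_succ, mul_comm]

theorem List.exists_drop_iff_exists_suffix {α : Type*} (l : List α) (P : List α → Prop) :
    (∃ k < l.length, P (l.drop k)) ↔ ∃ s, s <:+ l ∧ s ≠ [] ∧ P s := by
  constructor
  · rintro ⟨k, hk, hP⟩
    exact ⟨l.drop k, l.drop_suffix k, by simpa [List.drop_eq_nil_iff] using hk, hP⟩
  · rintro ⟨s, hs, hne, hP⟩
    have hlen : 0 < s.length := List.length_pos_iff.mpr hne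
    refine ⟨l.length - s.length, by have := hs.length_le; omega, ?_⟩
    rwa [← List.suffix_iff_eq_drop.mp hs]

theorem differentiable_q (t : ℝ) : Differentiable ℝ (q t) := by
  unfold q
  fun_prop

theorem deriv_q (t x : ℝ) : deriv (q t) x = -2 * x := by
  unfold q
  simp

theorem q_eq_of_abs_eq {t x y : ℝ} (h : |x| = |y|) : q t x = q t y := by
  rw [q, q, ← sq_abs x, h, sq_abs]

theorem q_phi_cons {t s : ℝ} {ρ : List ℝ} (hs : s = 1 ∨ s = -1) (hrad : 0 ≤ t + phi ρ t) :
    q t (phi (s :: ρ) t) = -phi ρ t := by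
  have hs2 : s ^ 2 = 1 := by rcases hs with rfl | rfl <;> norm_num
  rw [q, phi, mul_pow, hs2, Real.sq_sqrt hrad]
  ring

theorem abs_q_iterate_phi {σ : List ℝ} {t : ℝ} (hσ : IsSigns σ) (hdom : InDom σ t) :
    ∀ k ≤ σ.length, |(q t)^[k] (phi σ t)| = |phi (σ.drop k) t| := by
  intro k
  induction k with
  | zero => simp
  | succ k ih =>
    intro hk
    have hdrop : σ.drop k = σ[k] :: σ.drop (k + 1) := List.drop_eq_getElem_cons hk
    have hrad : 0 ≤ t + phi (σ.drop (k + 1)) t :=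
      hdom.2 _ (σ.drop_suffix _) fun h => by
        have := congrArg List.length h
        simp only [List.length_drop] at this
        omega
    rw [Function.iterate_succ_apply', q_eq_of_abs_eq (ih (Nat.le_of_lt hk)), hdrop,
      q_phi_cons (hσ _ (List.getElem_mem hk)) hrad, abs_neg]

theorem deriv_iterate_eq_zero_iff_suffix_branch_vanishes_general
    (σ : List ℝ) (hσ : IsSigns σ)
    (t : ℝ) (hdom : InDom σ t) :
    deriv (fun x => (q t)^[σ.length] x) (phi σ t) = 0 ↔
      ∃ ρ : List ℝ, ρ <:+ σ ∧ ρ ≠ [] ∧ phi ρ t = 0 := by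
  rw [← σ.exists_drop_iff_exists_suffix, deriv_iterate_eq_prod (differentiable_q t),
    Finset.prod_eq_zero_iff]
  simp only [Finset.mem_range, deriv_q, mul_eq_zero, OfNat.ofNat_ne_zero, neg_eq_zero,
    false_or]
  refine exists_congr fun k => and_congr_right fun hk => ?_
  rw [← abs_eq_zero, abs_q_iterate_phi hσ hdom k hk.le, abs_eq_zero]

/-- For `σ ∈ {±1}^n` and `t ∈ [0,2]` in the definition domain of `φ_σ`, the
derivative of `q_t^n` vanishes at `φ_σ(t)` if and only if some root branch
`φ_ρ(t)`, for a nonempty suffix `ρ` of `σ`, vanishes at `t`: singular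
parameters of a root branch are exactly those where the corresponding zero of
`q_t^n` is a multiple zero. -/
theorem deriv_iterate_eq_zero_iff_suffix_branch_vanishes
    (σ : List ℝ) (hσ : IsSigns σ) (hne : σ ≠ [])
    (t : ℝ) (ht : t ∈ Set.Icc (0 : ℝ) 2) (hdom : InDom σ t) :
    deriv (fun x => (q t)^[σ.length] x) (phi σ t) = 0 ↔
      ∃ ρ : List ℝ, ρ <:+ σ ∧ ρ ≠ [] ∧ phi ρ t = 0 :=
  deriv_iterate_eq_zero_iff_suffix_branch_vanishes_general σ hσ t hdom
end

section
/- Let σ = (σ₁,…,σ_s) ∈ {+1,−1}^s and ρ = (ρ₁,…,ρ_r) ∈ {+1,−1}^r with s ≥ r and σ ≠ ρ, and let t₀ belong to the definition domains of both φ_σ and φ_ρ with φ_σ(t₀) = φ_ρ(t₀). Then: (a) if there is an index 1 ≤ i ≤ r with σ_i ≠ ρ_i, and i is the smallest such index, then φ_{(σ_i,…,σ_s)}(t₀) = φ_{(ρ_i,…,ρ_r)}(t₀) = 0; (b) if σ_i = ρ_i for all 1 ≤ i ≤ r (so s > r), then φ_{(σ_{r+1},…,σ_s)}(t₀) = 0.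 Consequently, two distinct root branches can take the same value at t₀ only if some suffix root branch vanishes at t₀. -/
/-!
Since every sign is nonzero and `√` is injective on `[0, ∞)`, equality of two branches
propagates down a common prefix of their sign sequences to equality of the suffix branches.
At the first index where the signs differ, `σᵢ √A = -σᵢ √B` with `√A, √B ≥ 0` forces both
roots to vanish; if instead `ρ` is a prefix of `σ`, the suffix of `σ` after `ρ` is matched
against the empty branch `φ_[] = 0`.
-/

namespace List

theorem drop_eq_getD_cons {α : Type*} {l : List α} {i : ℕ} (d : α) (h : i < l.length) :
    l.drop i = l.getD i d :: l.drop (i + 1) := by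
  rw [drop_eq_getElem_cons h, getD_eq_getElem l d h]

theorem take_eq_take_of_forall_getD_eq {α : Type*} {l l' : List α} {d : α} {j : ℕ}
    (hl : j ≤ l.length) (hl' : j ≤ l'.length) (h : ∀ i < j, l.getD i d = l'.getD i d) :
    l.take j = l'.take j := by
  refine ext_getElem (by simp [hl, hl']) fun i hi _ => ?_
  have hij : i < j := hi.trans_le (length_take_le j l)
  have := h i hij
  rw [getD_eq_getElem _ _ (hij.trans_le hl), getD_eq_getElem _ _ (hij.trans_le hl')] at this
  simpa using this

end List

theorem IsSigns.ne_zero {σ : List ℝ} (hσ : IsSigns σ) {s : ℝ} (hs : s ∈ σ) : s ≠ 0 := by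
  rcases hσ s hs with rfl | rfl <;> norm_num

theorem IsSigns.getD_eq_one_or_neg_one {σ : List ℝ} (hσ : IsSigns σ) {j : ℕ}
    (hj : j < σ.length) : σ.getD j 0 = 1 ∨ σ.getD j 0 = -1 := by
  rw [List.getD_eq_getElem _ _ hj]
  exact hσ _ (List.getElem_mem hj)

theorem InDom.tail {s t : ℝ} {l : List ℝ} (h : InDom (s :: l) t) : InDom l t := by
  refine ⟨h.1, fun ρ hρ _ => h.2 ρ (hρ.trans (List.suffix_cons s l)) ?_⟩
  rintro rfl
  simpa using hρ.length_le

theorem InDom.radicand_nonneg {s t : ℝ} {l : List ℝ} (h : InDom (s :: l) t) :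
    0 ≤ t + phi l t :=
  h.2 l (List.suffix_cons s l) (List.cons_ne_self s l).symm

theorem phi_eq_of_phi_append_eq {p a b : List ℝ} {t : ℝ} (hp : ∀ s ∈ p, s ≠ 0)
    (ha : InDom (p ++ a) t) (hb : InDom (p ++ b) t) (h : phi (p ++ a) t = phi (p ++ b) t) :
    phi a t = phi b t := by
  induction p with
  | nil => simpa using h
  | cons s p ih =>
    refine ih (fun x hx => hp x (List.mem_cons_of_mem s hx)) ha.tail hb.tail ?_
    have hsqrt : √(t + phi (p ++ a) t) = √(t + phi (p ++ b) t) :=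
      mul_left_cancel₀ (hp s List.mem_cons_self) h
    exact add_left_cancel ((Real.sqrt_inj ha.radicand_nonneg hb.radicand_nonneg).mp hsqrt)

theorem phi_drop_eq_of_take_eq {σ ρ : List ℝ} {t : ℝ} {j : ℕ} (hσ : IsSigns σ)
    (hdσ : InDom σ t) (hdρ : InDom ρ t) (htake : σ.take j = ρ.take j)
    (heq : phi σ t = phi ρ t) : phi (σ.drop j) t = phi (ρ.drop j) t := by
  have hσ' : σ = σ.take j ++ σ.drop j := (List.take_append_drop j σ).symm
  have hρ' : ρ = σ.take j ++ ρ.drop j := by rw [htake, List.take_append_drop]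
  rw [hσ'] at hdσ
  rw [hρ'] at hdρ
  rw [hσ', hρ'] at heq
  exact phi_eq_of_phi_append_eq (fun s hs => hσ.ne_zero (List.mem_of_mem_take hs)) hdσ hdρ heq

theorem phi_cons_eq_zero_of_phi_cons_eq {a b t : ℝ} {l m : List ℝ} (ha : a = 1 ∨ a = -1)
    (hb : b = 1 ∨ b = -1) (hab : a ≠ b) (h : phi (a :: l) t = phi (b :: m) t) :
    phi (a :: l) t = 0 ∧ phi (b :: m) t = 0 := by
  have hl := Real.sqrt_nonneg (t + phi l t)
  have hm := Real.sqrt_nonneg (t + phi m t)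
  simp only [phi] at h ⊢
  rcases ha with rfl | rfl <;> rcases hb with rfl | rfl <;>
    first | exact absurd rfl hab | constructor <;> linarith

section CommonPrefix

variable {σ ρ : List ℝ} {t : ℝ}

theorem phi_drop_eq_of_forall_getD_eq (hσ : IsSigns σ) (hlen : ρ.length ≤ σ.length)
    (hdσ : InDom σ t) (hdρ : InDom ρ t) (heq : phi σ t = phi ρ t) {j : ℕ} (hj : j ≤ ρ.length)
    (hagree : ∀ i < j, σ.getD i 0 = ρ.getD i 0) : phi (σ.drop j) t = phi (ρ.drop j) t :=
  phi_drop_eq_of_take_eq hσ hdσ hdρ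
    (List.take_eq_take_of_forall_getD_eq (hj.trans hlen) hj hagree) heq

theorem phi_drop_eq_zero_of_getD_ne (hσ : IsSigns σ) (hρ : IsSigns ρ)
    (hlen : ρ.length ≤ σ.length) (hdσ : InDom σ t) (hdρ : InDom ρ t) (heq : phi σ t = phi ρ t)
    {j : ℕ} (hj : j < ρ.length) (hdiff : σ.getD j 0 ≠ ρ.getD j 0)
    (hagree : ∀ i < j, σ.getD i 0 = ρ.getD i 0) :
    phi (σ.drop j) t = 0 ∧ phi (ρ.drop j) t = 0 := by
  have hjσ := hj.trans_le hlen
  have h := phi_drop_eq_of_forall_getD_eq hσ hlen hdσ hdρ heq hj.le hagree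
  rw [List.drop_eq_getD_cons 0 hjσ, List.drop_eq_getD_cons 0 hj] at h ⊢
  exact phi_cons_eq_zero_of_phi_cons_eq (hσ.getD_eq_one_or_neg_one hjσ)
    (hρ.getD_eq_one_or_neg_one hj) hdiff h

end CommonPrefix

theorem eq_root_branches_forces_vanishing_suffix_general
    (σ ρ : List ℝ) (hσ : IsSigns σ) (hρ : IsSigns ρ)
    (hlen : ρ.length ≤ σ.length) (hne : σ ≠ ρ)
    (t₀ : ℝ) (hdσ : InDom σ t₀) (hdρ : InDom ρ t₀) (heq : phi σ t₀ = phi ρ t₀) :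
    ((∀ j < ρ.length, σ.getD j 0 ≠ ρ.getD j 0 →
        (∀ j' < j, σ.getD j' 0 = ρ.getD j' 0) →
        phi (σ.drop j) t₀ = 0 ∧ phi (ρ.drop j) t₀ = 0) ∧
     ((∀ j < ρ.length, σ.getD j 0 = ρ.getD j 0) →
        phi (σ.drop ρ.length) t₀ = 0)) ∧
    ∃ τ : List ℝ, τ ≠ [] ∧ (τ <:+ σ ∨ τ <:+ ρ) ∧ phi τ t₀ = 0 := by
  have partA := fun j (hj : j < ρ.length) =>
    phi_drop_eq_zero_of_getD_ne hσ hρ hlen hdσ hdρ heq hj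
  have partB : (∀ j < ρ.length, σ.getD j 0 = ρ.getD j 0) → phi (σ.drop ρ.length) t₀ = 0 :=
    fun hagree => by
      simpa [phi] using phi_drop_eq_of_forall_getD_eq hσ hlen hdσ hdρ heq le_rfl hagree
  refine ⟨⟨partA, partB⟩, ?_⟩
  by_cases hex : ∃ j < ρ.length, σ.getD j 0 ≠ ρ.getD j 0
  · obtain ⟨hjρ, hdiff⟩ := Nat.find_spec hex
    have hmin : ∀ i < Nat.find hex, σ.getD i 0 = ρ.getD i 0 := fun i hi =>
      by_contra fun h => Nat.find_min hex hi ⟨by omega, h⟩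
    refine ⟨_, ?_, Or.inl (List.drop_suffix _ _), (partA _ hjρ hdiff hmin).1⟩
    simp only [ne_eq, List.drop_eq_nil_iff, not_le]
    omega
  · push Not at hex
    have hlt : ρ.length < σ.length := by
      refine lt_of_le_of_ne hlen fun h => hne ?_
      have htake := List.take_eq_take_of_forall_getD_eq hlen le_rfl hex
      rwa [List.take_length, h, List.take_length] at htake
    exact ⟨_, by simpa using hlt, Or.inl (List.drop_suffix _ _), partB hex⟩

/-- If two distinct root branches `φ_σ` and `φ_ρ` (with `|σ| ≥ |ρ|`) take the
same value at a point `t₀` of both definition domains, then: (a) if `i` is the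
least (1-based) index where `σ` and `ρ` differ (here `j = i - 1` is 0-based),
both suffix branches starting at `i` vanish at `t₀`; (b) if `ρ` is an initial
segment of `σ`, then the suffix branch `φ_{(σ_{r+1},…,σ_s)}` vanishes at `t₀`.
Consequently some nonempty suffix root branch vanishes at `t₀`. -/
theorem eq_root_branches_forces_vanishing_suffix
    (σ ρ : List ℝ) (hσ : IsSigns σ) (hρ : IsSigns ρ)
    (hσne : σ ≠ []) (hρne : ρ ≠ []) (hlen : ρ.length ≤ σ.length) (hne : σ ≠ ρ)
    (t₀ : ℝ) (hdσ : InDom σ t₀) (hdρ : InDom ρ t₀) (heq : phi σ t₀ = phi ρ t₀) :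
    ((∀ j < ρ.length, σ.getD j 0 ≠ ρ.getD j 0 →
        (∀ j' < j, σ.getD j' 0 = ρ.getD j' 0) →
        phi (σ.drop j) t₀ = 0 ∧ phi (ρ.drop j) t₀ = 0) ∧
     ((∀ j < ρ.length, σ.getD j 0 = ρ.getD j 0) →
        phi (σ.drop ρ.length) t₀ = 0)) ∧
    ∃ τ : List ℝ, τ ≠ [] ∧ (τ <:+ σ ∨ τ <:+ ρ) ∧ phi τ t₀ = 0 :=
  eq_root_branches_forces_vanishing_suffix_general σ ρ hσ hρ hlen hne t₀ hdσ hdρ heq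
end

section
/- (Signed lexicographical order of root branches.) Let σ = (σ₁,…,σ_s) ∈ {+1,−1}^s and ρ = (ρ₁,…,ρ_r) ∈ {+1,−1}^r with s ≥ r and σ ≠ ρ, and let t ∈ (0,2] be a regular point of both φ_σ and φ_ρ. (a) If σ₁ ≠ ρ₁, then φ_σ(t) > φ_ρ(t) when σ₁ = +1 and φ_σ(t) < φ_ρ(t) when σ₁ = −1. (b) If σ_i = ρ_i for i = 1,…,k, where either k = r (and s > r) or σ_{k+1} ≠ ρ_{k+1}, then φ_σ(t) > φ_ρ(t) when the product σ₁·σ₂·⋯·σ_{k+1} = +1, and φ_σ(t) < φ_ρ(t) when this product is −1. -/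
theorem mul_sqrt_sub_sqrt_pos {c x y : ℝ} (hx : 0 ≤ x) (hy : 0 ≤ y) (h : 0 < c * (x - y)) :
    0 < c * (√x - √y) := by
  have hxy : x - y = (√x + √y) * (√x - √y) := by
    rw [← mul_self_sub_mul_self, Real.mul_self_sqrt hx, Real.mul_self_sqrt hy]
  rw [hxy, mul_left_comm] at h
  exact pos_of_mul_pos_right h (by positivity)

theorem IsSigns.of_cons {a : ℝ} {σ : List ℝ} (h : IsSigns (a :: σ)) : IsSigns σ :=
  fun s hs => h s (List.mem_cons_of_mem a hs)

theorem IsSigns.mul_self_head {a : ℝ} {σ : List ℝ} (h : IsSigns (a :: σ)) : a * a = 1 := by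
  rcases h a List.mem_cons_self with rfl | rfl <;> norm_num

theorem lt_length_of_prod_range_getD_ne_zero {σ : List ℝ} {k : ℕ}
    (h : ∏ i ∈ Finset.range (k + 1), σ.getD i 0 ≠ 0) : k < σ.length := by
  by_contra! hk
  exact h (Finset.prod_eq_zero (Finset.self_mem_range_succ k) (List.getD_eq_default σ 0 hk))

theorem lt_and_gt_of_mul_sub_pos {P x y : ℝ}
    (h : P ≠ 0 → 0 < P * (x - y)) : (P = 1 → y < x) ∧ (P = -1 → x < y) := by
  constructor <;> rintro rfl <;> linarith [h (by norm_num)]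

namespace IsRegularPt

variable {a t : ℝ} {σ : List ℝ}

theorem of_cons (h : IsRegularPt (a :: σ) t) : IsRegularPt σ t := by
  obtain ⟨⟨ht, hdom⟩, hreg⟩ := h
  refine ⟨⟨ht, fun ρ hρ _ => hdom ρ (hρ.trans (List.suffix_cons a σ)) ?_⟩,
    fun ρ hρ hne => hreg ρ (hρ.trans (List.suffix_cons a σ)) hne⟩
  rintro rfl
  simpa using hρ.length_le

theorem radicand_nonneg (h : IsRegularPt (a :: σ) t) : 0 ≤ t + phi σ t :=
  h.1.2 σ (List.suffix_cons a σ) (List.cons_ne_self a σ).symm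

theorem head_mul_phi_pos (h : IsRegularPt (a :: σ) t) (ha : a * a = 1) :
    0 < a * phi (a :: σ) t := by
  have hphi : phi (a :: σ) t ≠ 0 := h.2 _ (List.suffix_refl _) (List.cons_ne_nil a σ)
  have hsqrt : 0 < √(t + phi σ t) :=
    (Real.sqrt_nonneg _).lt_of_ne' (right_ne_zero_of_mul hphi)
  rwa [phi, ← mul_assoc, ha, one_mul]

end IsRegularPt

section

variable {t : ℝ}

theorem head_mul_phi_sub_phi_pos_of_head_ne {a b : ℝ} {σ ρ : List ℝ}
    (hσ : IsSigns (a :: σ)) (hρ : IsSigns (b :: ρ))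
    (hrσ : IsRegularPt (a :: σ) t) (hrρ : IsRegularPt (b :: ρ) t) (hab : a ≠ b) :
    0 < a * (phi (a :: σ) t - phi (b :: ρ) t) := by
  have hba : b = -a := by
    rcases hσ a List.mem_cons_self with rfl | rfl <;>
      rcases hρ b List.mem_cons_self with rfl | rfl <;> simp_all
  have hσpos := hrσ.head_mul_phi_pos hσ.mul_self_head
  have hρpos := hrρ.head_mul_phi_pos hρ.mul_self_head
  rw [hba] at hρpos ⊢
  linarith

theorem mul_phi_cons_sub_phi_cons_pos {a c : ℝ} {σ ρ : List ℝ} (ha : a * a = 1)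
    (hrσ : IsRegularPt (a :: σ) t) (hrρ : IsRegularPt (a :: ρ) t)
    (h : 0 < c * (phi σ t - phi ρ t)) :
    0 < a * c * (phi (a :: σ) t - phi (a :: ρ) t) := by
  have hsqrt := mul_sqrt_sub_sqrt_pos hrσ.radicand_nonneg hrρ.radicand_nonneg
    (show 0 < c * ((t + phi σ t) - (t + phi ρ t)) by rwa [add_sub_add_left_eq_sub])
  calc 0 < c * (√(t + phi σ t) - √(t + phi ρ t)) := hsqrt
    _ = a * c * (phi (a :: σ) t - phi (a :: ρ) t) := by
      simp only [phi]
      linear_combination (-c * (√(t + phi σ t) - √(t + phi ρ t))) * ha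

theorem prod_range_getD_mul_phi_sub_phi_pos :
    ∀ (k : ℕ) (σ ρ : List ℝ), IsSigns σ → IsSigns ρ → IsRegularPt σ t → IsRegularPt ρ t →
      k < σ.length → k ≤ ρ.length → (∀ i < k, σ.getD i 0 = ρ.getD i 0) →
      (k = ρ.length ∨ σ.getD k 0 ≠ ρ.getD k 0) →
      0 < (∏ i ∈ Finset.range (k + 1), σ.getD i 0) * (phi σ t - phi ρ t)
  | _, [], _, _, _, _, _, hkσ, _, _, _ => absurd hkσ (Nat.not_lt_zero _)
  | 0, a :: σ, [], hσ, _, hrσ, _, _, _, _, _ => by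
    simpa [phi] using hrσ.head_mul_phi_pos hσ.mul_self_head
  | 0, a :: σ, b :: ρ, hσ, hρ, hrσ, hrρ, _, _, _, hcase => by
    have hab : a ≠ b := by simpa using hcase
    simpa using head_mul_phi_sub_phi_pos_of_head_ne hσ hρ hrσ hrρ hab
  | _ + 1, _ :: _, [], _, _, _, _, _, hkρ, _, _ => absurd hkρ (Nat.not_succ_le_zero _)
  | k + 1, a :: σ, b :: ρ, hσ, hρ, hrσ, hrρ, hkσ, hkρ, hagree, hcase => by
    obtain rfl : a = b := by simpa using hagree 0 k.succ_pos
    have ih := prod_range_getD_mul_phi_sub_phi_pos k σ ρ hσ.of_cons hρ.of_cons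
      hrσ.of_cons hrρ.of_cons (by simpa using hkσ) (by simpa using hkρ)
      (fun i hi => by simpa using hagree (i + 1) (by omega)) (by simpa using hcase)
    rw [Finset.prod_range_succ', List.getD_cons_zero, mul_comm _ a]
    simpa using mul_phi_cons_sub_phi_cons_pos hσ.mul_self_head hrσ hrρ ih

end

theorem signed_lex_order_of_root_branches_general
    (σ ρ : List ℝ) (hσ : IsSigns σ) (hρ : IsSigns ρ)
    (t : ℝ)
    (hrσ : IsRegularPt σ t) (hrρ : IsRegularPt ρ t) :
    -- (a) first signs differ
    ((σ.getD 0 0 ≠ ρ.getD 0 0 →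
        (σ.getD 0 0 = 1 → phi ρ t < phi σ t) ∧
        (σ.getD 0 0 = -1 → phi σ t < phi ρ t)) ∧
    -- (b) first k signs agree; k = |ρ| or the (k+1)-th signs differ
     (∀ k, k ≤ ρ.length → (∀ i < k, σ.getD i 0 = ρ.getD i 0) →
        (k = ρ.length ∨ σ.getD k 0 ≠ ρ.getD k 0) →
        ((∏ i ∈ Finset.range (k + 1), σ.getD i 0) = 1 → phi ρ t < phi σ t) ∧
        ((∏ i ∈ Finset.range (k + 1), σ.getD i 0) = -1 → phi σ t < phi ρ t))) := by
  have order : ∀ k, k ≤ ρ.length → (∀ i < k, σ.getD i 0 = ρ.getD i 0) →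
      (k = ρ.length ∨ σ.getD k 0 ≠ ρ.getD k 0) →
      ((∏ i ∈ Finset.range (k + 1), σ.getD i 0) = 1 → phi ρ t < phi σ t) ∧
      ((∏ i ∈ Finset.range (k + 1), σ.getD i 0) = -1 → phi σ t < phi ρ t) :=
    fun k hkρ hagree hcase => lt_and_gt_of_mul_sub_pos fun hP =>
      prod_range_getD_mul_phi_sub_phi_pos k σ ρ hσ hρ hrσ hrρ
        (lt_length_of_prod_range_getD_ne_zero hP) hkρ hagree hcase
  refine ⟨fun hhead => ?_, order⟩
  simpa using order 0 (Nat.zero_le _) (by simp) (Or.inr hhead)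

/-- Signed lexicographical order of root branches: if `σ ≠ ρ` (with
`|σ| ≥ |ρ|`) and `t ∈ (0,2]` is a regular point of both `φ_σ` and `φ_ρ`, then
(a) if the first signs differ, `φ_σ(t) > φ_ρ(t)` when `σ₁ = +1` and
`φ_σ(t) < φ_ρ(t)` when `σ₁ = -1`; (b) if the first `k` signs agree and either
`k = |ρ|` or the `(k+1)`-th signs differ, then `φ_σ(t) > φ_ρ(t)` when
`σ₁·σ₂⋯σ_{k+1} = +1` and `φ_σ(t) < φ_ρ(t)` when `σ₁·σ₂⋯σ_{k+1} = -1`.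
(Lists are 0-indexed: `σ.getD i 0` is `σ_{i+1}`.) -/
theorem signed_lex_order_of_root_branches
    (σ ρ : List ℝ) (hσ : IsSigns σ) (hρ : IsSigns ρ)
    (hσne : σ ≠ []) (hρne : ρ ≠ []) (hlen : ρ.length ≤ σ.length) (hne : σ ≠ ρ)
    (t : ℝ) (ht : t ∈ Set.Ioc (0 : ℝ) 2)
    (hrσ : IsRegularPt σ t) (hrρ : IsRegularPt ρ t) :
    -- (a) first signs differ
    ((σ.getD 0 0 ≠ ρ.getD 0 0 →
        (σ.getD 0 0 = 1 → phi ρ t < phi σ t) ∧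
        (σ.getD 0 0 = -1 → phi σ t < phi ρ t)) ∧
    -- (b) first k signs agree; k = |ρ| or the (k+1)-th signs differ
     (∀ k, k ≤ ρ.length → (∀ i < k, σ.getD i 0 = ρ.getD i 0) →
        (k = ρ.length ∨ σ.getD k 0 ≠ ρ.getD k 0) →
        ((∏ i ∈ Finset.range (k + 1), σ.getD i 0) = 1 → phi ρ t < phi σ t) ∧
        ((∏ i ∈ Finset.range (k + 1), σ.getD i 0) = -1 → phi σ t < phi ρ t))) :=
  signed_lex_order_of_root_branches_general σ ρ hσ hρ t hrσ hrρ
end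

section
/- Let t₀ ∈ (0,2] and p ≥ 2, and suppose the critical point 0 is a superstable cycle of q_{t₀} of prime period p, i.e. q_{t₀}^p(0) = 0 and q_{t₀}^k(0) ≠ 0 for 1 ≤ k ≤ p−1. Let σ_k ∈ {+1,−1} be the sign of q_{t₀}^k(0) for 1 ≤ k ≤ p−1 (so σ₁ = +1). Then t₀ lies in the definition domain of the root branch φ_{(+1,−σ₂,…,−σ_{p−1})} of length p−1, it satisfies the fixed-point equation t₀ = φ_{(+1,−σ₂,…,−σ_{p−1})}(t₀), and t₀ is a regular point of this root branch. -/
/-!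
Write `x k = q_{t₀}^k(0)`, so `x (k + 1) = t₀ - (x k)²` and hence
`-x k = (-sign (x k)) · √(t₀ + (-x (k + 1)))`. Descending from `x p = 0`, the suffixes of the
signature `(-sign (x 2), …, -sign (x (p - 1)))` evaluate at `t₀` to `-x 2, …, -x (p - 1), 0`.
So every radicand is a square `(x k)²`, the values are nonzero by the minimality of the period,
and the full branch gives `√((x 1)²) = x 1 = t₀`.
-/
theorem Real.sign_mul_sqrt_sq (x : ℝ) : Real.sign x * √(x ^ 2) = x := by
  rw [Real.sqrt_sq_eq_abs]
  rcases lt_trichotomy x 0 with hx | rfl | hx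
  · rw [Real.sign_of_neg hx, abs_of_neg hx, neg_one_mul, neg_neg]
  · simp
  · rw [Real.sign_of_pos hx, abs_of_pos hx, one_mul]

theorem inDom_cons_iff {s t : ℝ} {σ : List ℝ} :
    InDom (s :: σ) t ↔ 0 ≤ t ∧ ∀ ρ, ρ <:+ σ → 0 ≤ t + phi ρ t := by
  refine and_congr_right fun _ => ⟨fun h ρ hρ => h ρ (hρ.trans (List.suffix_cons s σ)) ?_,
    fun h ρ hρ hne => h ρ ((List.suffix_cons_iff.mp hρ).resolve_left hne)⟩
  rintro rfl
  simpa using hρ.length_le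

theorem isRegularPt_cons_iff {s t : ℝ} {σ : List ℝ} :
    IsRegularPt (s :: σ) t ↔
      InDom (s :: σ) t ∧ phi (s :: σ) t ≠ 0 ∧ ∀ ρ, ρ <:+ σ → ρ ≠ [] → phi ρ t ≠ 0 := by
  simp only [IsRegularPt, List.suffix_cons_iff, or_imp, forall_and, forall_eq, ne_eq,
    reduceCtorEq, not_false_eq_true, forall_const]

theorem phi_cons_neg_sign_of_eq_q {t x y : ℝ} {ρ : List ℝ} (hy : y = q t x)
    (hρ : phi ρ t = -y) : phi (-Real.sign x :: ρ) t = -x := by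
  have hrad : t + phi ρ t = x ^ 2 := by rw [hρ, hy, q]; ring
  rw [phi, hrad, neg_mul, Real.sign_mul_sqrt_sq]

noncomputable def orbitSignature (x : ℕ → ℝ) (k m : ℕ) : List ℝ :=
  List.ofFn fun j : Fin m => -Real.sign (x (k + j))

@[simp]
theorem length_orbitSignature (x : ℕ → ℝ) (k m : ℕ) : (orbitSignature x k m).length = m :=
  List.length_ofFn

theorem orbitSignature_succ (x : ℕ → ℝ) (k m : ℕ) :
    orbitSignature x k (m + 1) = -Real.sign (x k) :: orbitSignature x (k + 1) m := by
  rw [orbitSignature, List.ofFn_succ, orbitSignature]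
  congr 2
  funext j
  rw [Fin.val_succ, add_comm (j : ℕ) 1, add_assoc]

theorem phi_of_suffix_orbitSignature {t : ℝ} {x : ℕ → ℝ} (hx : ∀ j, x (j + 1) = q t (x j))
    {m k : ℕ} (hzero : x (k + m) = 0) {ρ : List ℝ}
    (hρ : ρ <:+ orbitSignature x k m) : phi ρ t = -x (k + m - ρ.length) := by
  induction m generalizing k ρ with
  | zero =>
    obtain rfl : ρ = [] := by simpa [orbitSignature] using hρ
    simpa [phi] using hzero
  | succ m ih =>
    have ih' := @ih (k + 1) (by rwa [add_right_comm, add_assoc])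
    rw [orbitSignature_succ, List.suffix_cons_iff] at hρ
    rcases hρ with rfl | hρ
    · rw [List.length_cons, length_orbitSignature, Nat.add_sub_cancel]
      exact phi_cons_neg_sign_of_eq_q (hx k) (by simpa using ih' List.suffix_rfl)
    · rw [ih' hρ]
      congr 2
      omega

theorem add_phi_of_suffix_orbitSignature {t : ℝ} {x : ℕ → ℝ}
    (hx : ∀ j, x (j + 1) = q t (x j)) {m k : ℕ} (hzero : x (k + 1 + m) = 0) {ρ : List ℝ}
    (hρ : ρ <:+ orbitSignature x (k + 1) m) : t + phi ρ t = x (k + m - ρ.length) ^ 2 := by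
  have hlen : ρ.length ≤ m := by simpa using hρ.length_le
  rw [phi_of_suffix_orbitSignature hx hzero hρ,
    show k + 1 + m - ρ.length = k + m - ρ.length + 1 by omega, hx, q]
  ring

/-- If `0` is a superstable cycle of `q_{t₀}` of prime period `p ≥ 2`
(`q_{t₀}^p(0) = 0`, `q_{t₀}^k(0) ≠ 0` for `1 ≤ k ≤ p-1`), and `σ_k` denotes the
sign of `q_{t₀}^k(0)`, then `t₀` lies in the definition domain of the root
branch with signature `(+1, -σ₂, …, -σ_{p-1})` of length `p - 1`, satisfies the
fixed-point equation `t₀ = φ_{(+1,-σ₂,…,-σ_{p-1})}(t₀)`, and is a regular point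
of this root branch. -/
theorem superstable_cycle_gives_root_branch_fixed_point
    (t₀ : ℝ) (ht : t₀ ∈ Set.Ioc (0 : ℝ) 2) (p : ℕ) (hp : 2 ≤ p)
    (hper : (q t₀)^[p] 0 = 0)
    (hprime : ∀ k, 1 ≤ k → k ≤ p - 1 → (q t₀)^[k] 0 ≠ 0)
    (L : List ℝ)
    (hL : L = List.ofFn (fun j : Fin (p - 1) =>
      if (j : ℕ) = 0 then (1 : ℝ) else -Real.sign ((q t₀)^[(j : ℕ) + 1] 0))) :
    InDom L t₀ ∧ t₀ = phi L t₀ ∧ IsRegularPt L t₀ := by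
  obtain ⟨n, rfl⟩ : ∃ n, p = n + 2 := ⟨p - 2, by omega⟩
  set x : ℕ → ℝ := fun k => (q t₀)^[k] 0
  have horbit : ∀ j, x (j + 1) = q t₀ (x j) := fun j => Function.iterate_succ_apply' _ _ _
  have hzero : x (1 + 1 + n) = 0 := by rwa [add_comm]
  have hLS : L = 1 :: orbitSignature x 2 n := by
    rw [hL, List.ofFn_succ, orbitSignature]
    congr 1
    refine congrArg List.ofFn (funext fun j => ?_)
    rw [Fin.val_succ, if_neg (Nat.succ_ne_zero _), add_comm 2]
  have hphiL : phi L t₀ = t₀ := by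
    have hx1 : x 1 = t₀ := by simp [x, q]
    rw [hLS, phi, add_phi_of_suffix_orbitSignature horbit hzero List.suffix_rfl,
      length_orbitSignature, Nat.add_sub_cancel, hx1, one_mul, Real.sqrt_sq ht.1.le]
  have hdom : InDom L t₀ := by
    rw [hLS, inDom_cons_iff]
    refine ⟨ht.1.le, fun ρ hρ => ?_⟩
    rw [add_phi_of_suffix_orbitSignature horbit hzero hρ]
    positivity
  refine ⟨hdom, hphiL.symm, ?_⟩
  rw [hLS, isRegularPt_cons_iff, ← hLS, hphiL]
  refine ⟨hdom, ht.1.ne', fun ρ hρ hne => ?_⟩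
  have hlen : 0 < ρ.length ∧ ρ.length ≤ n :=
    ⟨List.length_pos_iff.mpr hne, by simpa using hρ.length_le⟩
  rw [phi_of_suffix_orbitSignature horbit hzero hρ, neg_ne_zero]
  exact hprime _ (by omega) (by omega)
end

section
/- The quadratic family has superstable cycles of arbitrary length: there exists a strictly increasing sequence (t_n)_{n≥1} of parameters with 1 ≤ t_n < 2 and t_n → 2 as n → ∞ such that, for every n ≥ 1, the critical point 0 is periodic under q_{t_n} with prime period n+1, i.e. q_{t_n}^{n+1}(0) = 0 and q_{t_n}^{k}(0) ≠ 0 for all 1 ≤ k ≤ n. -/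
open Set Filter Topology

section LastNonneg

variable {f : ℝ → ℝ} {a b x : ℝ}

noncomputable def lastNonneg (f : ℝ → ℝ) (a b : ℝ) : ℝ := sSup {x ∈ Icc a b | 0 ≤ f x}

lemma le_lastNonneg (hx : x ∈ Icc a b) (hfx : 0 ≤ f x) : x ≤ lastNonneg f a b :=
  le_csSup (bddAbove_Icc.mono inter_subset_left) ⟨hx, hfx⟩

lemma neg_of_lastNonneg_lt (hx : x ∈ Icc a b) (hlt : lastNonneg f a b < x) : f x < 0 :=
  lt_of_not_ge fun hfx => hlt.not_ge (le_lastNonneg hx hfx)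

lemma lastNonneg_mem (hf : ContinuousOn f (Icc a b)) (hab : a ≤ b) (ha : 0 ≤ f a) :
    lastNonneg f a b ∈ {x ∈ Icc a b | 0 ≤ f x} := by
  have hcompact : IsCompact {x ∈ Icc a b | 0 ≤ f x} :=
    isCompact_Icc.of_isClosed_subset
      (hf.preimage_isClosed_of_isClosed isClosed_Icc isClosed_Ici) inter_subset_left
  exact hcompact.sSup_mem ⟨a, left_mem_Icc.2 hab, ha⟩

lemma apply_lastNonneg_eq_zero (hf : ContinuousOn f (Icc a b)) (hab : a ≤ b) (ha : 0 ≤ f a)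
    (hb : f b ≤ 0) : f (lastNonneg f a b) = 0 := by
  obtain ⟨⟨hac, hcb⟩, hfc⟩ := lastNonneg_mem hf hab ha
  obtain ⟨y, ⟨hcy, hyb⟩, hfy⟩ :=
    intermediate_value_Icc' hcb (hf.mono (Icc_subset_Icc_left hac)) ⟨hb, hfc⟩
  have hyc : y ≤ lastNonneg f a b := le_lastNonneg ⟨hac.trans hcy, hyb⟩ hfy.ge
  rwa [le_antisymm hyc hcy] at hfy

end LastNonneg

section QuadraticMap

variable {t x y a : ℝ}

lemma mapsTo_q_one : MapsTo (q 1) (Icc 0 1) (Icc 0 1) := fun x ⟨h0, h1⟩ =>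
  ⟨by unfold q; nlinarith, by unfold q; nlinarith⟩

lemma le_neg_one_of_q_nonpos (ht : 1 ≤ t) (hx : x < 0) (hq : q t x ≤ 0) : x ≤ -1 := by
  unfold q at hq; nlinarith

lemma two_mul_abs_sub_le_abs_q_sub (hx : x ≤ -1) (hy : y ≤ -1) :
    2 * |x - y| ≤ |q t x - q t y| := by
  have hxy : q t x - q t y = (y - x) * (y + x) := by unfold q; ring
  rw [hxy, abs_mul, abs_sub_comm, abs_of_neg (by linarith : y + x < 0), mul_comm]
  exact mul_le_mul_of_nonneg_left (by linarith) (abs_nonneg _)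

lemma exists_fixedPoint_q (ht₀ : 0 ≤ t) (ht₂ : t ≤ 2) : ∃ a ∈ Icc (-2) (-1), q t a = a := by
  set s := √(1 + 4 * t)
  have hs : s ^ 2 = 1 + 4 * t := Real.sq_sqrt (by linarith)
  have hs₀ : 0 ≤ s := Real.sqrt_nonneg _
  refine ⟨-(1 + s) / 2, ⟨by nlinarith, by nlinarith⟩, ?_⟩
  unfold q; linear_combination (-1 / 4 : ℝ) * hs

/-- Writing `t = a² + a`: `2 - t = (1 - a)(a + 2)` and `q_t²(0) - a = -a³(a + 2)`. -/
lemma two_sub_le_three_mul_q_q_sub (ha : a ∈ Icc (-2) (-1)) (hfix : q t a = a) :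
    2 - t ≤ 3 * (q t (q t 0) - a) := by
  obtain ⟨ha₂, ha₁⟩ := ha
  have ht : t = a ^ 2 + a := by unfold q at hfix; linarith
  subst ht
  unfold q
  nlinarith [mul_nonneg (by linarith : (0 : ℝ) ≤ a + 2) (by nlinarith : (0 : ℝ) ≤ -a ^ 3 - 1)]

end QuadraticMap

section CriticalOrbit

noncomputable def critOrbit (n : ℕ) (t : ℝ) : ℝ := (q t)^[n] 0

lemma critOrbit_succ (n : ℕ) (t : ℝ) : critOrbit (n + 1) t = q t (critOrbit n t) :=
  Function.iterate_succ_apply' _ _ _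

lemma critOrbit_one (t : ℝ) : critOrbit 1 t = t := by simp [critOrbit, q]

lemma continuous_critOrbit (n : ℕ) : Continuous (critOrbit n) := by
  induction n with
  | zero => exact continuous_const
  | succ n ih =>
    simp only [funext (critOrbit_succ n), q]
    exact continuous_id.sub (ih.pow 2)

lemma critOrbit_at_one_nonneg (n : ℕ) : 0 ≤ critOrbit n 1 :=
  (mapsTo_q_one.iterate n ⟨le_rfl, zero_le_one⟩).1

lemma critOrbit_at_two (n : ℕ) : critOrbit (n + 2) 2 = -2 := by
  rw [critOrbit, Function.iterate_add_apply]
  exact Function.iterate_fixed (by norm_num [q]) n |>.trans (by norm_num [q])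

end CriticalOrbit

section SuperstableParam

variable {n k : ℕ}

noncomputable def superstableParam (n : ℕ) : ℝ := lastNonneg (critOrbit (n + 1)) 1 2

lemma superstableParam_mem (n : ℕ) :
    superstableParam n ∈ Icc 1 2 ∧ 0 ≤ critOrbit (n + 1) (superstableParam n) :=
  lastNonneg_mem (continuous_critOrbit _).continuousOn one_le_two (critOrbit_at_one_nonneg _)

lemma critOrbit_superstableParam (hn : 1 ≤ n) : critOrbit (n + 1) (superstableParam n) = 0 := by
  obtain ⟨m, rfl⟩ := Nat.exists_eq_add_of_le' hn
  exact apply_lastNonneg_eq_zero (continuous_critOrbit _).continuousOn one_le_two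
    (critOrbit_at_one_nonneg _) ((critOrbit_at_two m).trans_le (by norm_num))

lemma superstableParam_lt_succ (hn : 1 ≤ n) : superstableParam n < superstableParam (n + 1) := by
  have hmem := superstableParam_mem n
  have hnext : critOrbit (n + 2) (superstableParam n) = superstableParam n := by
    rw [critOrbit_succ, critOrbit_superstableParam hn, q]; ring
  have hle : superstableParam n ≤ superstableParam (n + 1) :=
    le_lastNonneg hmem.1 (by rw [hnext]; linarith [hmem.1.1])
  refine hle.lt_of_ne fun h => ?_
  have hzero := critOrbit_superstableParam (n := n + 1) (by omega)
  rw [← h, hnext] at hzero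
  linarith [hmem.1.1]

lemma superstableParam_lt_two (hn : 1 ≤ n) : superstableParam n < 2 :=
  (superstableParam_lt_succ hn).trans_le (superstableParam_mem _).1.2

lemma strictMonoOn_superstableParam : StrictMonoOn superstableParam (Ici 1) :=
  strictMonoOn_of_lt_add_one ordConnected_Ici fun _ _ hm _ => superstableParam_lt_succ hm

lemma critOrbit_superstableParam_neg (h2k : 2 ≤ k) (hkn : k ≤ n) :
    critOrbit k (superstableParam n) < 0 := by
  obtain ⟨j, rfl⟩ := Nat.exists_eq_add_of_le' (one_le_two.trans h2k)
  exact neg_of_lastNonneg_lt (superstableParam_mem n).1 <|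
    strictMonoOn_superstableParam (mem_Ici.2 (by omega)) (mem_Ici.2 (by omega)) (by omega)

lemma two_sub_superstableParam_le (n : ℕ) : 2 - superstableParam (n + 2) ≤ 3 / 2 ^ n := by
  set t := superstableParam (n + 2)
  obtain ⟨⟨ht₁, ht₂⟩, -⟩ := superstableParam_mem (n + 2)
  have hzero : critOrbit (n + 3) t = 0 := critOrbit_superstableParam (by omega)
  have hle : ∀ k, 2 ≤ k → k ≤ n + 2 → critOrbit k t ≤ -1 := fun k h2k hkn =>
    le_neg_one_of_q_nonpos ht₁ (critOrbit_superstableParam_neg h2k hkn) <| by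
      rw [← critOrbit_succ]
      rcases hkn.eq_or_lt with rfl | hlt
      · exact hzero.le
      · exact (critOrbit_superstableParam_neg (by omega) hlt).le
  obtain ⟨a, ha, hfix⟩ := exists_fixedPoint_q (by linarith) ht₂
  have hexpand : 2 ^ n * |critOrbit 2 t - a| ≤ |critOrbit (n + 2) t - a| :=
    geom_le (u := fun j => |critOrbit (j + 2) t - a|) zero_le_two n fun j hj => by
      rw [show j + 1 + 2 = (j + 2) + 1 by ring, critOrbit_succ (j + 2) t]
      conv_rhs => rw [← hfix]
      exact two_mul_abs_sub_le_abs_q_sub (hle (j + 2) le_add_self (by omega)) ha.2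
  have hlast : |critOrbit (n + 2) t - a| ≤ 1 := by
    have hsq : critOrbit (n + 2) t ^ 2 = t := by
      rw [critOrbit_succ, q] at hzero; linarith
    have := hle (n + 2) le_add_self le_rfl
    rw [abs_le]; constructor <;> nlinarith [ha.1, ha.2]
  have hstart : 2 - t ≤ 3 * (critOrbit 2 t - a) := two_sub_le_three_mul_q_q_sub ha hfix
  rw [le_div_iff₀ (by positivity)]
  nlinarith [le_abs_self (critOrbit 2 t - a), pow_pos (zero_lt_two (α := ℝ)) n]

lemma tendsto_superstableParam : Tendsto superstableParam atTop (𝓝 2) := by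
  rw [← tendsto_add_atTop_iff_nat 2]
  have hbound : Tendsto (fun n : ℕ => 2 - 3 / (2 : ℝ) ^ n) atTop (𝓝 2) := by
    simpa using (tendsto_const_nhds (x := (2 : ℝ))).sub <|
      (tendsto_const_nhds (x := (3 : ℝ))).div_atTop
        (tendsto_pow_atTop_atTop_of_one_lt one_lt_two)
  refine tendsto_of_tendsto_of_tendsto_of_le_of_le hbound tendsto_const_nhds (fun n => ?_)
    fun n => (superstableParam_mem _).1.2
  linarith [two_sub_superstableParam_le n]

end SuperstableParam

/-- The quadratic family has superstable cycles of arbitrary length: there is a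
sequence `(t_n)_{n ≥ 1}`, strictly increasing, with `1 ≤ t_n < 2` and
`t_n → 2`, such that for each `n ≥ 1` the critical point `0` is periodic under
`q_{t_n}` with prime period `n + 1`. -/
theorem superstable_cycles_of_arbitrary_length :
    ∃ t : ℕ → ℝ,
      (∀ n, 1 ≤ n → t n < t (n + 1)) ∧
      (∀ n, 1 ≤ n → 1 ≤ t n ∧ t n < 2) ∧
      Filter.Tendsto t Filter.atTop (nhds 2) ∧
      ∀ n, 1 ≤ n →
        (q (t n))^[n + 1] 0 = 0 ∧ ∀ k, 1 ≤ k → k ≤ n → (q (t n))^[k] 0 ≠ 0 := by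
  refine ⟨superstableParam, fun n hn => superstableParam_lt_succ hn,
    fun n hn => ⟨(superstableParam_mem n).1.1, superstableParam_lt_two hn⟩,
    tendsto_superstableParam, fun n hn => ⟨critOrbit_superstableParam hn, fun k hk hkn => ?_⟩⟩
  obtain rfl | h2k := hk.eq_or_lt
  · exact (critOrbit_one _).trans_ne (one_pos.trans_le (superstableParam_mem n).1.1).ne'
  · exact (critOrbit_superstableParam_neg h2k hkn).ne
end

section
/- For every n ≥ 1, the polynomial q_2^n (the n-th iterate of q_2(x) = 2 − x²) has exactly 2^n real roots, all simple and all lying in the open interval (−2,2); explicitly, the map σ ↦ x̄_σ := φ_σ(2) = σ₁√(2 + σ₂√(2 + ⋯ + σ_n√2)) from {+1,−1}^ن to ℝ is injective, each x̄_σ satisfies q_2^n(x̄_σ) = 0 with derivative of q_2^n nonzero at x̄_σ, −2 < x̄_σ < 2, and every real x with q_2^n(x) = 0 equals x̄_σ for some σ ∈ {+1,−1}^n. -/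
/-!
Since `s² = 1`, squaring undoes one layer of the radical: `q_t(s√(t + y)) = -y`. As `q_t` is
even, the zero set of `q_t^n` is symmetric, so `x̄_{s :: ρ}` is a root of `q_2^{n+1}` as soon
as `x̄_ρ` is one of `q_2^n`; conversely a root `x` of `q_2^{n+1}` has `-q_2(x) = x² - 2` a root
of `q_2^n`, and `x = s|x| = s√(2 + (x² - 2))` for its sign `s`. The same identity recovers
`x̄_ρ` and then `s` from `x̄_{s :: ρ}`, which gives injectivity. The derivative of `q_t^n` at `x`
is `∏_{k<n} (-2 q_t^k(x))`, and no root of `q_2^n` passes through `0` before time `n`,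
because the orbit of `0` is `0 ↦ 2 ↦ -2 ↦ -2 ↦ ⋯`; hence all roots are simple.
-/

open Finset

lemma q_neg (t x : ℝ) : q t (-x) = q t x := by
  simp only [q, neg_sq]

lemma q_sign_mul_sqrt {t s y : ℝ} (hs : s = 1 ∨ s = -1) (hy : 0 ≤ t + y) :
    q t (s * √(t + y)) = -y := by
  have hs2 : s ^ 2 = 1 := by rcases hs with rfl | rfl <;> norm_num
  rw [q, mul_pow, hs2, one_mul, Real.sq_sqrt hy]
  ring

lemma iterate_q_neg_eq_zero_iff (t x : ℝ) (n : ℕ) :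
    (q t)^[n] (-x) = 0 ↔ (q t)^[n] x = 0 := by
  cases n with
  | zero => exact neg_eq_zero
  | succ n => rw [Function.iterate_succ_apply, Function.iterate_succ_apply, q_neg]

lemma hasDerivAt_q (t x : ℝ) : HasDerivAt (q t) (-2 * x) x := by
  have h := (hasDerivAt_pow 2 x).const_sub t
  rw [Nat.cast_ofNat, pow_one, ← neg_mul] at h
  exact h

lemma hasDerivAt_iterate_q (t x : ℝ) (n : ℕ) :
    HasDerivAt (q t)^[n] (∏ k ∈ range n, -2 * (q t)^[k] x) x := by
  induction n with
  | zero => simpa using hasDerivAt_id x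
  | succ n ih =>
    rw [Function.iterate_succ', prod_range_succ, mul_comm]
    exact (hasDerivAt_q t _).comp x ih

lemma iterate_succ_q_two_zero_ne_zero (k : ℕ) : (q 2)^[k + 1] 0 ≠ 0 := by
  have hfix : q 2 (-2) = -2 := by norm_num [q]
  cases k with
  | zero => norm_num [q]
  | succ k =>
    rw [Function.iterate_succ_apply, Function.iterate_succ_apply,
      show q 2 (q 2 0) = -2 by norm_num [q], Function.iterate_fixed hfix]
    norm_num

lemma iterate_q_two_ne_zero_of_root {x : ℝ} {n k : ℕ} (hx : (q 2)^[n] x = 0) (hk : k < n) :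
    (q 2)^[k] x ≠ 0 := by
  intro hkx
  obtain ⟨m, rfl⟩ := Nat.exists_eq_add_of_lt hk
  rw [show k + m + 1 = (m + 1) + k by ring, Function.iterate_add_apply, hkx] at hx
  exact iterate_succ_q_two_zero_ne_zero m hx

lemma deriv_iterate_q_two_ne_zero_of_root {x : ℝ} {n : ℕ} (hx : (q 2)^[n] x = 0) :
    deriv (q 2)^[n] x ≠ 0 := by
  rw [(hasDerivAt_iterate_q 2 x n).deriv, prod_ne_zero_iff]
  intro k hk
  exact mul_ne_zero (by norm_num) (iterate_q_two_ne_zero_of_root hx (mem_range.mp hk))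

lemma isSigns_cons {s : ℝ} {τ : List ℝ} : IsSigns (s :: τ) ↔ (s = 1 ∨ s = -1) ∧ IsSigns τ :=
  List.forall_mem_cons

lemma abs_phi_lt_two {σ : List ℝ} (hσ : IsSigns σ) : |phi σ 2| < 2 := by
  induction σ with
  | nil => norm_num [phi]
  | cons s τ ih =>
    obtain ⟨hs, hτ⟩ := isSigns_cons.mp hσ
    have hlt := abs_lt.mp (ih hτ)
    have habs : |phi (s :: τ) 2| = √(2 + phi τ 2) := by
      rcases hs with rfl | rfl <;> simp [phi]
    rw [habs, Real.sqrt_lt' two_pos]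
    linarith

lemma q_two_phi_cons {s : ℝ} {τ : List ℝ} (hσ : IsSigns (s :: τ)) :
    q 2 (phi (s :: τ) 2) = -phi τ 2 := by
  obtain ⟨hs, hτ⟩ := isSigns_cons.mp hσ
  have hrad : 0 ≤ 2 + phi τ 2 := by linarith [(abs_lt.mp (abs_phi_lt_two hτ)).1]
  exact q_sign_mul_sqrt hs hrad

lemma iterate_q_two_phi {σ : List ℝ} (hσ : IsSigns σ) : (q 2)^[σ.length] (phi σ 2) = 0 := by
  induction σ with
  | nil => rfl
  | cons s τ ih =>
    rw [List.length_cons, Function.iterate_succ_apply, q_two_phi_cons hσ,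
      iterate_q_neg_eq_zero_iff]
    exact ih (isSigns_cons.mp hσ).2

lemma phi_injective {σ ρ : List ℝ} (hσ : IsSigns σ) (hρ : IsSigns ρ)
    (hlen : σ.length = ρ.length) (heq : phi σ 2 = phi ρ 2) : σ = ρ := by
  induction σ generalizing ρ with
  | nil => exact (List.length_eq_zero_iff.mp hlen.symm).symm
  | cons s τ ih =>
    obtain _ | ⟨s', τ'⟩ := ρ
    · simp at hlen
    have htail : phi τ 2 = phi τ' 2 := by
      simpa only [neg_inj, q_two_phi_cons hσ, q_two_phi_cons hρ] using congrArg (q 2) heq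
    have hτ : τ = τ' := ih (isSigns_cons.mp hσ).2 (isSigns_cons.mp hρ).2
      (Nat.succ_injective hlen) htail
    have hsqrt : √(2 + phi τ 2) ≠ 0 := by
      rw [Real.sqrt_ne_zero']
      linarith [(abs_lt.mp (abs_phi_lt_two (isSigns_cons.mp hσ).2)).1]
    rw [phi, phi, ← htail] at heq
    rw [mul_right_cancel₀ hsqrt heq, hτ]

lemma exists_sign_mul_abs (x : ℝ) : ∃ s : ℝ, (s = 1 ∨ s = -1) ∧ x = s * |x| := by
  rcases le_or_gt 0 x with hx | hx
  · exact ⟨1, Or.inl rfl, by rw [one_mul, abs_of_nonneg hx]⟩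
  · exact ⟨-1, Or.inr rfl, by rw [abs_of_neg hx]; ring⟩

lemma exists_phi_eq_of_iterate_q_two_eq_zero {n : ℕ} {x : ℝ} (hx : (q 2)^[n] x = 0) :
    ∃ σ : List ℝ, IsSigns σ ∧ σ.length = n ∧ x = phi σ 2 := by
  induction n generalizing x with
  | zero => exact ⟨[], fun _ h => absurd h List.not_mem_nil, rfl, hx⟩
  | succ n ih =>
    rw [Function.iterate_succ_apply, ← iterate_q_neg_eq_zero_iff] at hx
    obtain ⟨ρ, hρ, hlen, hxρ⟩ := ih hx
    obtain ⟨s, hs, hxs⟩ := exists_sign_mul_abs x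
    have hrad : 2 + phi ρ 2 = x ^ 2 := by rw [← hxρ, q]; ring
    refine ⟨s :: ρ, isSigns_cons.mpr ⟨hs, hρ⟩, by rw [List.length_cons, hlen], ?_⟩
    rw [phi, hrad, Real.sqrt_sq_eq_abs]
    exact hxs

theorem roots_of_iterated_q_two_general (n : ℕ) :
    (∀ σ ρ : List ℝ, IsSigns σ → IsSigns ρ → σ.length = n → ρ.length = n →
      phi σ 2 = phi ρ 2 → σ = ρ) ∧
    (∀ σ : List ℝ, IsSigns σ → σ.length = n →
      (q 2)^[n] (phi σ 2) = 0 ∧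
      deriv (fun x => (q 2)^[n] x) (phi σ 2) ≠ 0 ∧
      -2 < phi σ 2 ∧ phi σ 2 < 2) ∧
    (∀ x : ℝ, (q 2)^[n] x = 0 →
      ∃ σ : List ℝ, IsSigns σ ∧ σ.length = n ∧ x = phi σ 2) := by
  refine ⟨fun σ ρ hσ hρ hσn hρn => phi_injective hσ hρ (hσn.trans hρn.symm),
    fun σ hσ hσn => ?_, fun x hx => exists_phi_eq_of_iterate_q_two_eq_zero hx⟩
  have hroot : (q 2)^[n] (phi σ 2) = 0 := hσn ▸ iterate_q_two_phi hσ
  exact ⟨hroot, deriv_iterate_q_two_ne_zero_of_root hroot, abs_lt.mp (abs_phi_lt_two hσ)⟩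

/-- For every `n ≥ 1`, the polynomial `q_2^n` has exactly `2^n` real roots, all
simple and in `(-2,2)`: the map `σ ↦ x̄_σ := φ_σ(2)` from sign sequences of
length `n` to `ℝ` is injective; each `x̄_σ` is a root of `q_2^n` at which the
derivative of `q_2^n` is nonzero and `-2 < x̄_σ < 2`; and every real root of
`q_2^n` is of this form. -/
theorem roots_of_iterated_q_two (n : ℕ) (hn : 1 ≤ n) :
    (∀ σ ρ : List ℝ, IsSigns σ → IsSigns ρ → σ.length = n → ρ.length = n →
      phi σ 2 = phi ρ 2 → σ = ρ) ∧
    (∀ σ : List ℝ, IsSigns σ → σ.length = n →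
      (q 2)^[n] (phi σ 2) = 0 ∧
      deriv (fun x => (q 2)^[n] x) (phi σ 2) ≠ 0 ∧
      -2 < phi σ 2 ∧ phi σ 2 < 2) ∧
    (∀ x : ℝ, (q 2)^[n] x = 0 →
      ∃ σ : List ℝ, IsSigns σ ∧ σ.length = n ∧ x = phi σ 2) :=
  roots_of_iterated_q_two_general n
end

section
/- For every n ≥ 1 and every sign sequence σ = (σ₁,…,σ_n) ∈ {+1,−1}^n, the nested radical x̄_σ = σ₁√(2 + σ₂√(2 + ⋯ + σ_n√2)) has the trigonometric closed form x̄_σ = 2·sin( (π/4) · Σ_{k=1}^{n} (σ₁σ₂⋯σ_k) / 2^{k−1} ). -/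
/-!
Let `S σ` be the signed dyadic sum in the claimed formula. It satisfies
`S (s :: ρ) = s·(1 + S ρ / 2)` and `|S ρ| ≤ 2`, so `θ = (π/4)·S ρ` lies in `[-π/2, π/2]`, where the
half-angle identity `√(2 + 2 sin θ) = 2 sin (π/4 + θ/2)` holds. It carries `φ_ρ(2) = 2 sin θ` to
`φ_{s :: ρ}(2) = s·√(2 + φ_ρ(2)) = 2 sin ((π/4)·S (s :: ρ))`, and the induction on `σ` starts from
`φ_{[]}(2) = 0 = 2 sin 0`.
-/

open Real

noncomputable def signedDyadicSum (σ : List ℝ) : ℝ :=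
  ∑ k ∈ Finset.range σ.length, (∏ i ∈ Finset.range (k + 1), σ.getD i 0) / 2 ^ k

@[simp]
lemma signedDyadicSum_nil : signedDyadicSum [] = 0 := rfl

lemma signedDyadicSum_cons (s : ℝ) (ρ : List ℝ) :
    signedDyadicSum (s :: ρ) = s + s * signedDyadicSum ρ / 2 := by
  rw [signedDyadicSum, signedDyadicSum, List.length_cons, Finset.sum_range_succ', Finset.mul_sum,
    Finset.sum_div, add_comm]
  simp only [Finset.prod_range_succ' (fun i => (s :: ρ).getD i 0), List.getD_cons_succ,
    List.getD_cons_zero, Finset.prod_range_zero, one_mul, pow_zero, div_one, pow_succ]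
  congr 1
  refine Finset.sum_congr rfl fun k _ => ?_
  ring

lemma IsSigns.of_cons_s15 {s : ℝ} {ρ : List ℝ} (h : IsSigns (s :: ρ)) : IsSigns ρ :=
  fun x hx => h x (List.mem_cons_of_mem _ hx)

lemma IsSigns.head {s : ℝ} {ρ : List ℝ} (h : IsSigns (s :: ρ)) : s = 1 ∨ s = -1 :=
  h s List.mem_cons_self

lemma abs_signedDyadicSum_le_two {σ : List ℝ} (hσ : IsSigns σ) : |signedDyadicSum σ| ≤ 2 := by
  induction σ with
  | nil => simp
  | cons s ρ ih =>
    have hρ := ih hσ.of_cons_s15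
    rw [abs_le] at hρ ⊢
    rw [signedDyadicSum_cons]
    rcases hσ.head with rfl | rfl <;> constructor <;> linarith [hρ.1, hρ.2]

lemma sqrt_two_add_two_mul_sin {θ : ℝ} (h₁ : -(π / 2) ≤ θ) (h₂ : θ ≤ π / 2) :
    √(2 + 2 * sin θ) = 2 * sin (π / 4 + θ / 2) := by
  have hsin : 0 ≤ sin (π / 4 + θ / 2) :=
    sin_nonneg_of_nonneg_of_le_pi (by linarith) (by linarith [pi_pos])
  have hsq : 2 + 2 * sin θ = (2 * sin (π / 4 + θ / 2)) ^ 2 := by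
    rw [mul_pow, sin_sq_eq_half_sub, show 2 * (π / 4 + θ / 2) = θ + π / 2 by ring,
      cos_add_pi_div_two]
    ring
  rw [hsq, sqrt_sq (by linarith)]

lemma sign_mul_sin {s : ℝ} (hs : s = 1 ∨ s = -1) (x : ℝ) : s * sin x = sin (s * x) := by
  rcases hs with rfl | rfl <;> simp [sin_neg]

lemma phi_two_eq_two_mul_sin {σ : List ℝ} (hσ : IsSigns σ) :
    phi σ 2 = 2 * sin (π / 4 * signedDyadicSum σ) := by
  induction σ with
  | nil => simp [phi]
  | cons s ρ ih =>
    have hbound := abs_le.mp (abs_signedDyadicSum_le_two hσ.of_cons_s15)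
    have hθ : -(π / 2) ≤ π / 4 * signedDyadicSum ρ ∧ π / 4 * signedDyadicSum ρ ≤ π / 2 := by
      constructor <;> nlinarith [pi_pos]
    calc phi (s :: ρ) 2 = s * √(2 + 2 * sin (π / 4 * signedDyadicSum ρ)) := by
          rw [phi, ih hσ.of_cons_s15]
      _ = 2 * (s * sin (π / 4 + π / 4 * signedDyadicSum ρ / 2)) := by
          rw [sqrt_two_add_two_mul_sin hθ.1 hθ.2]; ring
      _ = 2 * sin (π / 4 * signedDyadicSum (s :: ρ)) := by
          rw [sign_mul_sin hσ.head, signedDyadicSum_cons]; ring_nf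

theorem nested_radical_trig_closed_form_general
    (σ : List ℝ) (hσ : IsSigns σ) :
    phi σ 2 = 2 * Real.sin (Real.pi / 4 *
      ∑ k ∈ Finset.range σ.length,
        (∏ i ∈ Finset.range (k + 1), σ.getD i 0) / 2 ^ k) :=
  phi_two_eq_two_mul_sin hσ

/-- Trigonometric closed form of the nested radical: for every sign sequence
`σ = (σ₁,…,σ_n) ∈ {±1}^n` (`n ≥ 1`),
`x̄_σ = φ_σ(2) = 2·sin((π/4)·Σ_{k=1}^{n} (σ₁σ₂⋯σ_k)/2^{k-1})`.
(Lists are 0-indexed: `σ.getD i 0` is `σ_{i+1}`.) -/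
theorem nested_radical_trig_closed_form
    (σ : List ℝ) (hσ : IsSigns σ) (hne : σ ≠ []) :
    phi σ 2 = 2 * Real.sin (Real.pi / 4 *
      ∑ k ∈ Finset.range σ.length,
        (∏ i ∈ Finset.range (k + 1), σ.getD i 0) / 2 ^ k) :=
  nested_radical_trig_closed_form_general σ hσ
end
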